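/- arXiv:2507.19866 — 7 statements merged into one kernel-verified Lean document; each statement's English description precedes it below -/
import Mathlib

section
/- Let N ≥ 2 be an integer, A := (N²/(N−1))^{N−1}, and let M > A. Suppose T ∈ (0,∞], and U : [0,1]×[0,T) → ℝ is continuous with U(·,t) ∈ C¹([0,1]) for every t, U is C^{2,1} on (0,1]×(0,T) (i.e. U, U_ξ, U_{ξξ}, U_t exist and are continuous there), U satisfies U_t = N² ξ^{2−2/N} U_{ξξ} + N ξ^{1−2/N} U^{1/(N−1)} U_ξ for all (ξ,t) ∈ (0,1)×(0,T), U(0,t) = 0 and U(1,t) = M for all t ∈ (0,T), and U(ξ,t) > 0, U_ξ(ξ,t) > 0 for all (ξ,t) ∈ (0,1]×(0,T). Then T ≤ T⋆ := (1/(2N))·((M/A)^{1/(N−1)} − 1)^{−1}. In particular, no such solution exists on [0,∞). -/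
/-!
With `p = N / (N - 1)`, the quantity `G = N² ξ U_ξ - N² U + (N - 1) U ^ p` (`flux`) satisfies
`∂ξ G = ξ ^ (2/N - 1) U_t`, so integrating over `[ε, 1] × [t₀, t₁]` and using `0 ≤ U ≤ M` gives
`∫ G(1, t) dt - ∫ G(ε, t) dt = ∫ ξ ^ (2/N - 1) (U(ξ, t₁) - U(ξ, t₀)) dξ ≤ M N / 2`.
At `ξ = 1`, `G ≥ (N - 1) M ^ p - N² M = N² M ((M / A) ^ (1/(N-1)) - 1)`, which is positive for
supercritical mass. Near `ξ = 0` the term `ξ U_ξ` is not uniformly small, but its average over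
`ε ∈ [δ/2, δ]` is at most `δ U(δ, t)`, which is small since `U(0, t) = 0`. So the `ε`-average
of `∫ G(ε, t) dt` tends to `0`, and `N² M ((M / A) ^ (1/(N-1)) - 1) (t₁ - t₀) ≤ M N / 2`.
-/

open Set Filter Topology MeasureTheory Function

section Rectangle

variable {f : ℝ → ℝ → ℝ} {a b c d : ℝ}

theorem integrable_uncurry_of_continuousOn
    (hf : ContinuousOn (uncurry f) (Icc a b ×ˢ Icc c d)) :
    Integrable (uncurry f) ((volume.restrict (Ioc a b)).prod (volume.restrict (Ioc c d))) := by
  rw [Measure.prod_restrict, ← Measure.volume_eq_prod]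
  exact (hf.integrableOn_compact (isCompact_Icc.prod isCompact_Icc)).mono_set
    (prod_mono Ioc_subset_Icc_self Ioc_subset_Icc_self)

theorem intervalIntegral_integral_swap_of_continuousOn (hab : a ≤ b) (hcd : c ≤ d)
    (hf : ContinuousOn (uncurry f) (Icc a b ×ˢ Icc c d)) :
    ∫ x in a..b, ∫ y in c..d, f x y = ∫ y in c..d, ∫ x in a..b, f x y := by
  simp only [intervalIntegral.integral_of_le hab, intervalIntegral.integral_of_le hcd]
  exact integral_integral_swap (integrable_uncurry_of_continuousOn hf)

theorem intervalIntegrable_intervalIntegral_of_continuousOn (hab : a ≤ b) (hcd : c ≤ d)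
    (hf : ContinuousOn (uncurry f) (Icc a b ×ˢ Icc c d)) :
    IntervalIntegrable (fun x => ∫ y in c..d, f x y) volume a b := by
  rw [intervalIntegrable_iff_integrableOn_Ioc_of_le hab]
  simp only [intervalIntegral.integral_of_le hcd]
  exact (integrable_uncurry_of_continuousOn hf).integral_prod_left

/-- Green's theorem on `[a, b] × [c, d]` for the closed form `G dt + V dx`. -/
theorem integral_sub_eq_integral_sub_of_hasDerivAt {G V : ℝ → ℝ → ℝ} (hab : a ≤ b)
    (hcd : c ≤ d) (hf : ContinuousOn (uncurry f) (Icc a b ×ˢ Icc c d))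
    (hG : ∀ t ∈ Icc c d, ContinuousOn (G · t) (Icc a b))
    (hGx : ∀ t ∈ Icc c d, ∀ x ∈ Ioo a b, HasDerivAt (G · t) (f x t) x)
    (hVt : ∀ x ∈ Icc a b, ∀ t ∈ Icc c d, HasDerivAt (V x ·) (f x t) t) :
    ∫ t in c..d, (G b t - G a t) = ∫ x in a..b, (V x d - V x c) := by
  have hx : ∀ t ∈ Icc c d, ContinuousOn (f · t) (Icc a b) := fun t ht =>
    hf.comp (continuous_id.prodMk continuous_const).continuousOn fun x hx => ⟨hx, ht⟩
  have ht : ∀ x ∈ Icc a b, ContinuousOn (f x ·) (Icc c d) := fun x hx =>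
    hf.comp (continuous_const.prodMk continuous_id).continuousOn fun t ht => ⟨hx, ht⟩
  calc ∫ t in c..d, (G b t - G a t) = ∫ t in c..d, ∫ x in a..b, f x t := by
        refine intervalIntegral.integral_congr fun t htcd => ?_
        rw [uIcc_of_le hcd] at htcd
        refine (intervalIntegral.integral_eq_sub_of_hasDeriv_right_of_le hab (hG t htcd)
          (fun x hx => (hGx t htcd x hx).hasDerivWithinAt) ?_).symm
        exact (hx t htcd).intervalIntegrable_of_Icc hab
    _ = ∫ x in a..b, ∫ t in c..d, f x t :=
        (intervalIntegral_integral_swap_of_continuousOn hab hcd hf).symm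
    _ = ∫ x in a..b, (V x d - V x c) := by
        refine intervalIntegral.integral_congr fun x hxab => ?_
        rw [uIcc_of_le hab] at hxab
        refine intervalIntegral.integral_eq_sub_of_hasDerivAt
          (fun t htcd => hVt x hxab t (by rwa [uIcc_of_le hcd] at htcd)) ?_
        exact (ht x hxab).intervalIntegrable_of_Icc hcd

end Rectangle

theorem exists_forall_lt_of_continuousOn {f : ℝ → ℝ → ℝ} {K : Set ℝ} (hK : IsCompact K)
    (hf : ContinuousOn (uncurry f) (Icc 0 1 ×ˢ K)) (h0 : ∀ t ∈ K, f 0 t = 0) {σ : ℝ}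
    (hσ : 0 < σ) : ∃ δ ∈ Ioo (0 : ℝ) 1, ∀ ξ ∈ Icc 0 δ, ∀ t ∈ K, f ξ t < σ := by
  obtain ⟨δ, hδ, hclose⟩ := Metric.uniformContinuousOn_iff.1
    ((isCompact_Icc.prod hK).uniformContinuousOn_of_continuous hf) σ hσ
  refine ⟨min (δ / 2) (1 / 2),
    ⟨by positivity, by linarith [min_le_right (δ / 2) (1 / 2)]⟩, ?_⟩
  intro ξ hξ t ht
  have hξ1 : ξ ≤ 1 / 2 := hξ.2.trans (min_le_right _ _)
  have hξδ : ξ < δ := hξ.2.trans_lt ((min_le_left _ _).trans_lt (half_lt_self hδ))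
  have hdist : dist (ξ, t) ((0 : ℝ), t) < δ := by
    rwa [Prod.dist_eq, dist_self, Real.dist_eq, sub_zero, abs_of_nonneg hξ.1,
      max_eq_left hξ.1]
  have := hclose (ξ, t) ⟨⟨hξ.1, by linarith⟩, ht⟩ (0, t) ⟨left_mem_Icc.2 zero_le_one, ht⟩
    hdist
  rw [uncurry_apply_pair, uncurry_apply_pair, h0 t ht, Real.dist_eq, sub_zero] at this
  exact (le_abs_self _).trans_lt this

theorem integral_rpow_sub_one_le_inv {s ε : ℝ} (hs : 0 < s) (hε : 0 ≤ ε) :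
    ∫ x in ε..1, x ^ (s - 1) ≤ s⁻¹ := by
  rw [integral_rpow (Or.inl (by linarith)), sub_add_cancel, Real.one_rpow, div_eq_mul_inv]
  exact mul_le_of_le_one_left (inv_nonneg.2 hs.le)
    (sub_le_self _ (Real.rpow_nonneg hε _))

theorem le_coe_of_forall_sub_le {T : EReal} {S : ℝ} (hS : 0 ≤ S)
    (h : ∀ t₀ t₁ : ℝ, 0 < t₀ → t₀ < t₁ → (t₁ : EReal) < T → t₁ - t₀ ≤ S) :
    T ≤ S := by
  by_contra! hST
  obtain ⟨r, hSr, hrT⟩ := EReal.exists_between_coe_real hST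
  have hSr : S < r := EReal.coe_lt_coe_iff.1 hSr
  have := h ((r - S) / 2) r (by linarith) (by linarith) hrT
  linarith

noncomputable def flux (N ξ u v : ℝ) : ℝ :=
  N ^ 2 * ξ * v - N ^ 2 * u + (N - 1) * u ^ (N / (N - 1))

section Flux

variable {N : ℝ}

theorem continuous_flux (hN : 1 ≤ N) :
    Continuous fun z : ℝ × ℝ × ℝ => flux N z.1 z.2.1 z.2.2 := by
  unfold flux
  have hp : 0 ≤ N / (N - 1) := div_nonneg (by linarith) (by linarith)
  fun_prop (disch := exact hp)

theorem hasDerivAt_flux_of_pde {x Uξξ Ut : ℝ} {u v : ℝ → ℝ} (hN : 1 < N) (hx : 0 < x)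
    (hu : HasDerivAt u (v x) x) (hv : HasDerivAt v Uξξ x)
    (hpde : Ut = N ^ 2 * x ^ (2 - 2 / N) * Uξξ
      + N * x ^ (1 - 2 / N) * u x ^ (1 / (N - 1)) * v x) :
    HasDerivAt (fun ξ => flux N ξ (u ξ) (v ξ)) (x ^ (2 / N - 1) * Ut) x := by
  have hN1 : N - 1 ≠ 0 := by linarith
  have hp : 1 ≤ N / (N - 1) := by rw [le_div_iff₀ (by linarith)]; linarith
  have hderiv : HasDerivAt (fun ξ => flux N ξ (u ξ) (v ξ))
      (N ^ 2 * 1 * v x + N ^ 2 * x * Uξξ - N ^ 2 * v x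
        + (N - 1) * (v x * (N / (N - 1)) * u x ^ (N / (N - 1) - 1))) x :=
    ((((hasDerivAt_id x).const_mul (N ^ 2)).mul hv).sub (hu.const_mul (N ^ 2))).add
      ((hu.rpow_const (Or.inr hp)).const_mul (N - 1))
  refine hderiv.congr_deriv ?_
  have h2 : x ^ (2 / N - 1) * x ^ (2 - 2 / N) = x := by
    rw [← Real.rpow_add hx]; norm_num
  have h1 : x ^ (2 / N - 1) * x ^ (1 - 2 / N) = 1 := by
    rw [← Real.rpow_add hx]; norm_num
  have hq : N / (N - 1) - 1 = 1 / (N - 1) := by field_simp; ring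
  have hN' : (N - 1) * (N / (N - 1)) = N := by field_simp
  rw [hpde, hq]
  linear_combination -(N ^ 2 * Uξξ * h2) - N * u x ^ (1 / (N - 1)) * v x * h1
    + u x ^ (1 / (N - 1)) * v x * hN'

theorem flux_le {ξ b σ u v : ℝ} (hN : 1 < N) (hξ : ξ ≤ b) (hv : 0 ≤ v) (hu : 0 ≤ u)
    (huσ : u ≤ σ) (hσ : σ ≤ 1) : flux N ξ u v ≤ N ^ 2 * b * v + (N - 1) * σ := by
  have hp : 1 ≤ N / (N - 1) := by rw [le_div_iff₀ (by linarith)]; linarith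
  have hup : u ^ (N / (N - 1)) ≤ u := Real.rpow_le_self_of_le_one hu (huσ.trans hσ) hp
  unfold flux
  nlinarith [mul_le_mul_of_nonneg_right hξ hv, sq_nonneg N]

theorem integral_flux_le {a b σ : ℝ} {u v : ℝ → ℝ} (hN : 1 < N) (hab : a ≤ b)
    (hb : 0 ≤ b) (hσ : σ ≤ 1) (hu : ContinuousOn u (Icc a b)) (hv : ContinuousOn v (Icc a b))
    (huv : ∀ x ∈ Ioo a b, HasDerivAt u (v x) x) (hv0 : ∀ x ∈ Icc a b, 0 ≤ v x)
    (hu0 : ∀ x ∈ Icc a b, 0 ≤ u x) (huσ : ∀ x ∈ Icc a b, u x ≤ σ) :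
    ∫ x in a..b, flux N x (u x) (v x) ≤ (N ^ 2 * b + (N - 1) * (b - a)) * σ := by
  have hflux : ContinuousOn (fun x => flux N x (u x) (v x)) (Icc a b) :=
    (continuous_flux hN.le).comp_continuousOn (continuousOn_id.prodMk (hu.prodMk hv))
  have hFTC : ∫ x in a..b, v x = u b - u a :=
    intervalIntegral.integral_eq_sub_of_hasDeriv_right_of_le hab hu
      (fun x hx => (huv x hx).hasDerivWithinAt) (hv.intervalIntegrable_of_Icc hab)
  calc ∫ x in a..b, flux N x (u x) (v x)
      ≤ ∫ x in a..b, (N ^ 2 * b * v x + (N - 1) * σ) :=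
        intervalIntegral.integral_mono_on hab (hflux.intervalIntegrable_of_Icc hab)
          ((continuousOn_const.mul hv).add continuousOn_const |>.intervalIntegrable_of_Icc hab)
          fun x hx => flux_le hN hx.2 (hv0 x hx) (hu0 x hx) (huσ x hx) hσ
    _ = N ^ 2 * b * (u b - u a) + (N - 1) * σ * (b - a) := by
        rw [intervalIntegral.integral_add ((hv.intervalIntegrable_of_Icc hab).const_mul _)
          intervalIntegrable_const, intervalIntegral.integral_const_mul, hFTC,
          intervalIntegral.integral_const, smul_eq_mul, mul_comm (b - a)]
    _ ≤ (N ^ 2 * b + (N - 1) * (b - a)) * σ := by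
        have hdiff : u b - u a ≤ σ := by
          linarith [hu0 a (left_mem_Icc.2 hab), huσ b (right_mem_Icc.2 hab)]
        nlinarith [mul_le_mul_of_nonneg_left hdiff (mul_nonneg (sq_nonneg N) hb)]

end Flux

/-- The problem on `[0, 1] × S` with the equation written in divergence form
`∂ξ (flux N ξ U Uξ) = ξ ^ (2 / N - 1) * ∂t U`. -/
structure IsFluxSolutionOn (N M : ℝ) (U Uξ Ut : ℝ → ℝ → ℝ) (S : Set ℝ) : Prop where
  continuousOn : ContinuousOn (uncurry U) (Icc 0 1 ×ˢ S)
  continuousOn_dξ : ContinuousOn (uncurry Uξ) (Ioc 0 1 ×ˢ S)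
  continuousOn_dt : ContinuousOn (uncurry Ut) (Ioc 0 1 ×ˢ S)
  hasDerivAt_dξ : ∀ t ∈ S, ∀ ξ ∈ Ioo (0 : ℝ) 1, HasDerivAt (U · t) (Uξ ξ t) ξ
  hasDerivAt_dt : ∀ t ∈ S, ∀ ξ ∈ Ioc (0 : ℝ) 1, HasDerivAt (U ξ ·) (Ut ξ t) t
  hasDerivAt_flux : ∀ t ∈ S, ∀ ξ ∈ Ioo (0 : ℝ) 1,
    HasDerivAt (fun x => flux N x (U x t) (Uξ x t)) (ξ ^ (2 / N - 1) * Ut ξ t) ξ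
  zero : ∀ t ∈ S, U 0 t = 0
  one : ∀ t ∈ S, U 1 t = M
  dξ_nonneg : ∀ t ∈ S, ∀ ξ ∈ Ioc (0 : ℝ) 1, 0 ≤ Uξ ξ t

namespace IsFluxSolutionOn

variable {N M t₀ t₁ : ℝ} {U Uξ Ut : ℝ → ℝ → ℝ} {S : Set ℝ}

theorem continuousOn_slice (h : IsFluxSolutionOn N M U Uξ Ut S) {t : ℝ} (ht : t ∈ S) :
    ContinuousOn (U · t) (Icc 0 1) :=
  h.continuousOn.comp (continuous_id.prodMk continuous_const).continuousOn
    fun _ hξ => ⟨hξ, ht⟩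

theorem mem_Icc (h : IsFluxSolutionOn N M U Uξ Ut S) {t ξ : ℝ} (ht : t ∈ S)
    (hξ : ξ ∈ Icc (0 : ℝ) 1) : U ξ t ∈ Icc 0 M := by
  have hmono : MonotoneOn (U · t) (Icc 0 1) := by
    refine monotoneOn_of_hasDerivWithinAt_nonneg (f' := (Uξ · t)) (convex_Icc 0 1)
      (h.continuousOn_slice ht)
      (fun x hx => ?_) fun x hx => ?_
    · rw [interior_Icc] at hx ⊢
      exact (h.hasDerivAt_dξ t ht x hx).hasDerivWithinAt
    · rw [interior_Icc] at hx
      exact h.dξ_nonneg t ht x ⟨hx.1, hx.2.le⟩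
  have h0 := hmono (left_mem_Icc.2 zero_le_one) hξ hξ.1
  have h1 := hmono hξ (right_mem_Icc.2 zero_le_one) hξ.2
  simp only [h.zero t ht, h.one t ht] at h0 h1
  exact ⟨h0, h1⟩

theorem continuousOn_flux (h : IsFluxSolutionOn N M U Uξ Ut S) (hN : 1 ≤ N) :
    ContinuousOn (fun p : ℝ × ℝ => flux N p.1 (U p.1 p.2) (Uξ p.1 p.2)) (Ioc 0 1 ×ˢ S) :=
  (continuous_flux hN).comp_continuousOn (continuous_fst.continuousOn.prodMk
    ((h.continuousOn.mono (prod_mono_left Ioc_subset_Icc_self)).prodMk h.continuousOn_dξ))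

theorem mul_sub_le_integral_flux_one (h : IsFluxSolutionOn N M U Uξ Ut S) (hN : 1 < N)
    (ht : t₀ ≤ t₁) (hsub : Icc t₀ t₁ ⊆ S) :
    ((N - 1) * M ^ (N / (N - 1)) - N ^ 2 * M) * (t₁ - t₀)
      ≤ ∫ t in t₀..t₁, flux N 1 (U 1 t) (Uξ 1 t) := by
  rw [mul_comm, ← smul_eq_mul, ← intervalIntegral.integral_const]
  refine intervalIntegral.integral_mono_on ht intervalIntegrable_const
    ((h.continuousOn_flux hN.le).comp (continuous_const.prodMk continuous_id).continuousOn
      (fun _ ht' => ⟨⟨one_pos, le_rfl⟩, hsub ht'⟩) |>.intervalIntegrable_of_Icc ht)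
    fun t ht' => ?_
  have := h.dξ_nonneg t (hsub ht') 1 ⟨one_pos, le_rfl⟩
  simp only [flux, h.one t (hsub ht')]
  nlinarith [sq_nonneg N]

theorem integral_rpow_mul_sub_le (h : IsFluxSolutionOn N M U Uξ Ut S) (hN : 0 < N)
    (ht : t₀ ≤ t₁) (hsub : Icc t₀ t₁ ⊆ S) {ε : ℝ} (hε : ε ∈ Ioo (0 : ℝ) 1) :
    ∫ x in ε..1, (x ^ (2 / N - 1) * U x t₁ - x ^ (2 / N - 1) * U x t₀) ≤ M * N / 2 := by
  have hS₀ := hsub (left_mem_Icc.2 ht)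
  have hS₁ := hsub (right_mem_Icc.2 ht)
  have hIcc : Icc ε 1 ⊆ Icc 0 1 := Icc_subset_Icc_left hε.1.le
  have hw : ContinuousOn (fun x : ℝ => x ^ (2 / N - 1)) (Icc ε 1) :=
    continuousOn_id.rpow_const fun x hx => Or.inl (hε.1.trans_le hx.1).ne'
  have hM : 0 ≤ M := nonempty_Icc.1 ⟨_, h.mem_Icc hS₀ (left_mem_Icc.2 zero_le_one)⟩
  calc ∫ x in ε..1, (x ^ (2 / N - 1) * U x t₁ - x ^ (2 / N - 1) * U x t₀)
      ≤ ∫ x in ε..1, M * x ^ (2 / N - 1) := by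
        refine intervalIntegral.integral_mono_on hε.2.le
          ((hw.mul ((h.continuousOn_slice hS₁).mono hIcc)).sub
            (hw.mul ((h.continuousOn_slice hS₀).mono hIcc)) |>.intervalIntegrable_of_Icc hε.2.le)
          ((continuousOn_const.mul hw).intervalIntegrable_of_Icc hε.2.le) fun x hx => ?_
        have hw0 : 0 ≤ x ^ (2 / N - 1) := Real.rpow_nonneg (hε.1.le.trans hx.1) _
        have h₁ := h.mem_Icc hS₁ (hIcc hx)
        have h₀ := h.mem_Icc hS₀ (hIcc hx)
        nlinarith [mul_le_mul_of_nonneg_left h₁.2 hw0, mul_nonneg hw0 h₀.1]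
    _ ≤ M * (2 / N)⁻¹ := by
        rw [intervalIntegral.integral_const_mul]
        exact mul_le_mul_of_nonneg_left
          (integral_rpow_sub_one_le_inv (by positivity) hε.1.le) hM
    _ = M * N / 2 := by rw [inv_div, mul_div_assoc]

theorem le_integral_flux (h : IsFluxSolutionOn N M U Uξ Ut S) (hN : 1 < N) (ht : t₀ ≤ t₁)
    (hsub : Icc t₀ t₁ ⊆ S) {ε : ℝ} (hε : ε ∈ Ioo (0 : ℝ) 1) :
    ((N - 1) * M ^ (N / (N - 1)) - N ^ 2 * M) * (t₁ - t₀) - M * N / 2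
      ≤ ∫ t in t₀..t₁, flux N ε (U ε t) (Uξ ε t) := by
  set G : ℝ → ℝ → ℝ := fun x t => flux N x (U x t) (Uξ x t)
  have hG := h.continuousOn_flux hN.le
  have hGint : ∀ x ∈ Ioc (0 : ℝ) 1, IntervalIntegrable (G x ·) volume t₀ t₁ :=
    fun x hx => (hG.comp (continuous_const.prodMk continuous_id).continuousOn
      fun _ ht' => ⟨hx, hsub ht'⟩).intervalIntegrable_of_Icc ht
  have hIcc : Icc ε 1 ⊆ Ioc 0 1 := fun x hx => ⟨hε.1.trans_le hx.1, hx.2⟩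
  have hw : ContinuousOn (fun x : ℝ => x ^ (2 / N - 1)) (Icc ε 1) :=
    continuousOn_id.rpow_const fun x hx => Or.inl (hε.1.trans_le hx.1).ne'
  have hstokes := integral_sub_eq_integral_sub_of_hasDerivAt (G := G)
    (V := fun x t => x ^ (2 / N - 1) * U x t) (f := fun x t => x ^ (2 / N - 1) * Ut x t)
    hε.2.le ht
    ((hw.comp continuous_fst.continuousOn fun _ hp => hp.1).mul
      (h.continuousOn_dt.mono (prod_mono hIcc hsub)))
    (fun t ht' => hG.comp (continuous_id.prodMk continuous_const).continuousOn
      fun _ hx => ⟨hIcc hx, hsub ht'⟩)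
    (fun t ht' x hx => h.hasDerivAt_flux t (hsub ht') x ⟨hε.1.trans hx.1, hx.2⟩)
    (fun x hx t ht' => (h.hasDerivAt_dt t (hsub ht') x (hIcc hx)).const_mul _)
  rw [intervalIntegral.integral_sub (hGint 1 ⟨one_pos, le_rfl⟩)
    (hGint ε (hIcc ⟨le_rfl, hε.2.le⟩))] at hstokes
  linarith [h.mul_sub_le_integral_flux_one hN ht hsub,
    h.integral_rpow_mul_sub_le (by linarith) ht hsub hε]

theorem nonpos_of_le_integral_flux (h : IsFluxSolutionOn N M U Uξ Ut S) (hN : 1 < N)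
    (ht : t₀ ≤ t₁) (hsub : Icc t₀ t₁ ⊆ S) {c : ℝ}
    (hc : ∀ ε ∈ Ioo (0 : ℝ) 1, c ≤ ∫ t in t₀..t₁, flux N ε (U ε t) (Uξ ε t)) :
    c ≤ 0 := by
  set G : ℝ → ℝ → ℝ := fun x t => flux N x (U x t) (Uξ x t)
  suffices hσ : ∀ σ ∈ Ioo (0 : ℝ) 1, c ≤ (t₁ - t₀) * (2 * N ^ 2 + N - 1) * σ by
    refine ge_of_tendsto (x := 𝓝[>] (0 : ℝ))
      (((continuous_const_mul ((t₁ - t₀) * (2 * N ^ 2 + N - 1))).tendsto' 0 0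
        (mul_zero _)).mono_left nhdsWithin_le_nhds) ?_
    filter_upwards [Ioo_mem_nhdsGT one_pos] with σ hσ' using hσ σ hσ'
  intro σ hσ
  obtain ⟨δ, hδ, hsmall⟩ := exists_forall_lt_of_continuousOn isCompact_Icc
    (h.continuousOn.mono (prod_mono_right hsub)) (fun t ht' => h.zero t (hsub ht')) hσ.1
  have hδ2 : δ / 2 ≤ δ := by linarith [hδ.1]
  have hsub' : Icc (δ / 2) δ ⊆ Ioc 0 1 := fun x hx =>
    ⟨by linarith [hx.1, hδ.1], hx.2.trans hδ.2.le⟩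
  have hGrect : ContinuousOn (uncurry G) (Icc (δ / 2) δ ×ˢ Icc t₀ t₁) :=
    (h.continuousOn_flux hN.le).mono (prod_mono hsub' hsub)
  have hupper : ∫ x in δ / 2..δ, ∫ t in t₀..t₁, G x t
      ≤ (t₁ - t₀) * ((N ^ 2 * δ + (N - 1) * (δ - δ / 2)) * σ) := by
    rw [intervalIntegral_integral_swap_of_continuousOn hδ2 ht hGrect, ← smul_eq_mul,
      ← intervalIntegral.integral_const]
    refine intervalIntegral.integral_mono_on ht
      (intervalIntegrable_intervalIntegral_of_continuousOn (f := fun t x => G x t) ht hδ2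
        (hGrect.comp continuous_swap.continuousOn fun _ hp => ⟨hp.2, hp.1⟩))
      intervalIntegrable_const fun t ht' => ?_
    have htS := hsub ht'
    refine integral_flux_le hN hδ2 hδ.1.le hσ.2.le
      ((h.continuousOn_slice htS).mono fun x hx => Ioc_subset_Icc_self (hsub' hx))
      (h.continuousOn_dξ.comp (continuous_id.prodMk continuous_const).continuousOn
        fun x hx => ⟨hsub' hx, htS⟩)
      (fun x hx => h.hasDerivAt_dξ t htS x ⟨by linarith [hx.1, hδ.1], hx.2.trans hδ.2⟩)
      (fun x hx => h.dξ_nonneg t htS x (hsub' hx))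
      (fun x hx => (h.mem_Icc htS (Ioc_subset_Icc_self (hsub' hx))).1)
      fun x hx => (hsmall x ⟨(hsub' hx).1.le, hx.2⟩ t ht').le
  have hlower : (δ - δ / 2) * c ≤ ∫ x in δ / 2..δ, ∫ t in t₀..t₁, G x t := by
    rw [← smul_eq_mul, ← intervalIntegral.integral_const]
    exact intervalIntegral.integral_mono_on hδ2 intervalIntegrable_const
      (intervalIntegrable_intervalIntegral_of_continuousOn hδ2 ht hGrect)
      fun x hx => hc x ⟨(hsub' hx).1, hx.2.trans_lt hδ.2⟩
  have hδ0 : 0 < δ / 2 := by linarith [hδ.1]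
  refine le_of_mul_le_mul_left ?_ hδ0
  linarith

theorem mul_sub_le (h : IsFluxSolutionOn N M U Uξ Ut S) (hN : 1 < N) (ht : t₀ ≤ t₁)
    (hsub : Icc t₀ t₁ ⊆ S) :
    ((N - 1) * M ^ (N / (N - 1)) - N ^ 2 * M) * (t₁ - t₀) ≤ M * N / 2 := by
  linarith [h.nonpos_of_le_integral_flux hN ht hsub fun ε hε => h.le_integral_flux hN ht hsub hε]

end IsFluxSolutionOn

theorem sub_mul_rpow_eq {N M A : ℝ} (hN : 1 < N) (hM : 0 ≤ M) (hA : 0 < A)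
    (hAq : A ^ (1 / (N - 1)) = N ^ 2 / (N - 1)) :
    (N - 1) * M ^ (N / (N - 1)) - N ^ 2 * M = N ^ 2 * M * ((M / A) ^ (1 / (N - 1)) - 1) := by
  have hN1 : N - 1 ≠ 0 := by linarith
  have hp : N / (N - 1) = 1 + 1 / (N - 1) := by field_simp; ring
  rw [hp, Real.rpow_add' hM (by rw [← hp]; positivity), Real.rpow_one,
    Real.div_rpow hM hA.le, hAq]
  field_simp

theorem pow_sub_one_rpow_one_div {N : ℕ} (hN : 2 ≤ N) {x : ℝ} (hx : 0 ≤ x) :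
    (x ^ (N - 1)) ^ (1 / ((N : ℝ) - 1)) = x := by
  have hcast : ((N - 1 : ℕ) : ℝ) = N - 1 := by rw [Nat.cast_sub (by omega), Nat.cast_one]
  rw [one_div, ← hcast]
  exact Real.pow_rpow_inv_natCast hx (by omega)

theorem finite_time_blowup_supercritical_general
    (N : ℕ) (hN : 2 ≤ N)
    (A : ℝ) (hA : A = ((N : ℝ) ^ 2 / ((N : ℝ) - 1)) ^ (N - 1))
    (M : ℝ) (hM : A < M)
    (T : EReal)
    (U Uξ Uξξ Ut : ℝ → ℝ → ℝ)
    (hcont : ContinuousOn (fun p : ℝ × ℝ => U p.1 p.2)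
      (Icc 0 1 ×ˢ {t : ℝ | 0 ≤ t ∧ (t : EReal) < T}))
    (hC1 : ∀ t : ℝ, 0 ≤ t → (t : EReal) < T →
      (∀ ξ ∈ Icc (0:ℝ) 1, HasDerivWithinAt (fun s => U s t) (Uξ ξ t) (Icc 0 1) ξ) ∧
      ContinuousOn (fun ξ => Uξ ξ t) (Icc 0 1))
    (hC21 : ∀ ξ ∈ Ioc (0:ℝ) 1, ∀ t : ℝ, 0 < t → (t : EReal) < T →
      HasDerivWithinAt (fun s => Uξ s t) (Uξξ ξ t) (Ioc 0 1) ξ ∧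
      HasDerivAt (fun τ => U ξ τ) (Ut ξ t) t)
    (hUξcont : ContinuousOn (fun p : ℝ × ℝ => Uξ p.1 p.2)
      (Ioc 0 1 ×ˢ {t : ℝ | 0 < t ∧ (t : EReal) < T}))
    (hUtcont : ContinuousOn (fun p : ℝ × ℝ => Ut p.1 p.2)
      (Ioc 0 1 ×ˢ {t : ℝ | 0 < t ∧ (t : EReal) < T}))
    (hPDE : ∀ ξ ∈ Ioo (0:ℝ) 1, ∀ t : ℝ, 0 < t → (t : EReal) < T →
      Ut ξ t = (N : ℝ) ^ 2 * ξ ^ ((2 : ℝ) - 2 / N) * Uξξ ξ t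
        + (N : ℝ) * ξ ^ ((1 : ℝ) - 2 / N) * (U ξ t) ^ ((1 : ℝ) / ((N : ℝ) - 1)) * Uξ ξ t)
    (hbc0 : ∀ t : ℝ, 0 < t → (t : EReal) < T → U 0 t = 0)
    (hbc1 : ∀ t : ℝ, 0 < t → (t : EReal) < T → U 1 t = M)
    (hpos : ∀ ξ ∈ Ioc (0:ℝ) 1, ∀ t : ℝ, 0 < t → (t : EReal) < T →
      0 < U ξ t ∧ 0 < Uξ ξ t) :
    T ≤ ((1 / (2 * (N : ℝ)) * ((M / A) ^ ((1 : ℝ) / ((N : ℝ) - 1)) - 1)⁻¹ : ℝ) : EReal) := by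
  have hN1 : (1 : ℝ) < N := by exact_mod_cast hN
  have hB : 0 < (N : ℝ) ^ 2 / (N - 1) := div_pos (by positivity) (by linarith)
  have hA0 : 0 < A := hA ▸ pow_pos hB _
  have hM0 : 0 < M := hA0.trans hM
  have hgap : 0 < (M / A) ^ (1 / ((N : ℝ) - 1)) - 1 :=
    sub_pos.2 (Real.one_lt_rpow ((one_lt_div hA0).2 hM) (by simpa using hN1))
  have hdξ : ∀ t : ℝ, 0 < t → (t : EReal) < T → ∀ ξ ∈ Ioo (0 : ℝ) 1,
      HasDerivAt (U · t) (Uξ ξ t) ξ := fun t h₀ hT ξ hξ =>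
    ((hC1 t h₀.le hT).1 ξ (Ioo_subset_Icc_self hξ)).hasDerivAt (Icc_mem_nhds hξ.1 hξ.2)
  have hsol : IsFluxSolutionOn N M U Uξ Ut {t | 0 < t ∧ (t : EReal) < T} :=
    { continuousOn := hcont.mono (prod_mono_right fun t ht => ⟨ht.1.le, ht.2⟩)
      continuousOn_dξ := hUξcont
      continuousOn_dt := hUtcont
      hasDerivAt_dξ := fun t ht => hdξ t ht.1 ht.2
      hasDerivAt_dt := fun t ht ξ hξ => (hC21 ξ hξ t ht.1 ht.2).2
      hasDerivAt_flux := fun t ht ξ hξ =>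
        hasDerivAt_flux_of_pde hN1 hξ.1 (hdξ t ht.1 ht.2 ξ hξ)
        ((hC21 ξ ⟨hξ.1, hξ.2.le⟩ t ht.1 ht.2).1.hasDerivAt (Ioc_mem_nhds hξ.1 hξ.2))
        (hPDE ξ hξ t ht.1 ht.2)
      zero := fun t ht => hbc0 t ht.1 ht.2
      one := fun t ht => hbc1 t ht.1 ht.2
      dξ_nonneg := fun t ht ξ hξ => (hpos ξ hξ t ht.1 ht.2).2.le }
  refine le_coe_of_forall_sub_le (by positivity) fun t₀ t₁ h₀ h₀₁ h₁ => ?_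
  have hkey := hsol.mul_sub_le hN1 h₀₁.le fun t ht =>
    ⟨h₀.trans_le ht.1, (EReal.coe_le_coe_iff.2 ht.2).trans_lt h₁⟩
  rw [sub_mul_rpow_eq hN1 hM0.le hA0 (hA ▸ pow_sub_one_rpow_one_div hN hB.le)] at hkey
  rw [show 1 / (2 * (N : ℝ)) * ((M / A) ^ (1 / ((N : ℝ) - 1)) - 1)⁻¹
      = M * N / 2 / (N ^ 2 * M * ((M / A) ^ (1 / ((N : ℝ) - 1)) - 1)) by field_simp,
    le_div_iff₀ (by positivity)]
  linarith

/-- **Finite-time blow-up for supercritical mass (scalar accumulated-density form).**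
Let `N ≥ 2`, `A = (N²/(N−1))^(N−1)`, `M > A`.  If `U` is a solution of the
degenerate parabolic problem `U_t = N² ξ^{2−2/N} U_{ξξ} + N ξ^{1−2/N} U^{1/(N−1)} U_ξ`
on `(0,1)×(0,T)` with `U(0,t)=0`, `U(1,t)=M`, `U, U_ξ > 0` on `(0,1]×(0,T)`, and the
stated regularity, then `T ≤ T⋆ = (1/(2N))((M/A)^{1/(N−1)} − 1)⁻¹`. -/
theorem finite_time_blowup_supercritical
    (N : ℕ) (hN : 2 ≤ N)
    (A : ℝ) (hA : A = ((N : ℝ) ^ 2 / ((N : ℝ) - 1)) ^ (N - 1))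
    (M : ℝ) (hM : A < M)
    (T : EReal) (hT : 0 < T)
    (U Uξ Uξξ Ut : ℝ → ℝ → ℝ)
    (hcont : ContinuousOn (fun p : ℝ × ℝ => U p.1 p.2)
      (Icc 0 1 ×ˢ {t : ℝ | 0 ≤ t ∧ (t : EReal) < T}))
    (hC1 : ∀ t : ℝ, 0 ≤ t → (t : EReal) < T →
      (∀ ξ ∈ Icc (0:ℝ) 1, HasDerivWithinAt (fun s => U s t) (Uξ ξ t) (Icc 0 1) ξ) ∧
      ContinuousOn (fun ξ => Uξ ξ t) (Icc 0 1))
    (hC21 : ∀ ξ ∈ Ioc (0:ℝ) 1, ∀ t : ℝ, 0 < t → (t : EReal) < T →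
      HasDerivWithinAt (fun s => Uξ s t) (Uξξ ξ t) (Ioc 0 1) ξ ∧
      HasDerivAt (fun τ => U ξ τ) (Ut ξ t) t)
    (hUξcont : ContinuousOn (fun p : ℝ × ℝ => Uξ p.1 p.2)
      (Ioc 0 1 ×ˢ {t : ℝ | 0 < t ∧ (t : EReal) < T}))
    (hUξξcont : ContinuousOn (fun p : ℝ × ℝ => Uξξ p.1 p.2)
      (Ioc 0 1 ×ˢ {t : ℝ | 0 < t ∧ (t : EReal) < T}))
    (hUtcont : ContinuousOn (fun p : ℝ × ℝ => Ut p.1 p.2)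
      (Ioc 0 1 ×ˢ {t : ℝ | 0 < t ∧ (t : EReal) < T}))
    (hPDE : ∀ ξ ∈ Ioo (0:ℝ) 1, ∀ t : ℝ, 0 < t → (t : EReal) < T →
      Ut ξ t = (N : ℝ) ^ 2 * ξ ^ ((2 : ℝ) - 2 / N) * Uξξ ξ t
        + (N : ℝ) * ξ ^ ((1 : ℝ) - 2 / N) * (U ξ t) ^ ((1 : ℝ) / ((N : ℝ) - 1)) * Uξ ξ t)
    (hbc0 : ∀ t : ℝ, 0 < t → (t : EReal) < T → U 0 t = 0)
    (hbc1 : ∀ t : ℝ, 0 < t → (t : EReal) < T → U 1 t = M)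
    (hpos : ∀ ξ ∈ Ioc (0:ℝ) 1, ∀ t : ℝ, 0 < t → (t : EReal) < T →
      0 < U ξ t ∧ 0 < Uξ ξ t) :
    T ≤ ((1 / (2 * (N : ℝ)) * ((M / A) ^ ((1 : ℝ) / ((N : ℝ) - 1)) - 1)⁻¹ : ℝ) : EReal) :=
  finite_time_blowup_supercritical_general N hN A hA M hM T U Uξ Uξξ Ut hcont hC1 hC21 hUξcont
    hUtcont hPDE hbc0 hbc1 hpos
end

section
/- Let N ≥ 2 be an integer, A := (N²/(N−1))^{N−1}, and λ > 0. Define W_λ(ξ) := A λ^N ξ (1 + (λ^N ξ)^{1/(N−1)})^{1−N} for ξ ≥ 0. Then W_λ is continuous on [0,∞) and twice continuously differentiable on (0,∞), W_λ(0) = 0, its derivative satisfies W_λ′(ξ) = A λ^N (1 + (λ^N ξ)^{1/(N−1)})^{−N} > 0 for all ξ > 0, it solves the ordinary differential equation N ξ W_λ″(ξ) + W_λ(ξ)^{1/(N−1)} W_λ′(ξ) = 0 for all ξ > 0, it is strictly increasing and concave on [0,∞), 0 ≤ W_λ < A, and W_λ(ξ) → A as ξ → ∞. -/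
/-!
With `p = 1/(N-1)` one has `W_λ(ξ) = A g(λ^N ξ)` for the normalized profile
`g(x) = x (1 + x^p)^(-1/p)`. Its derivatives are `g' = (1 + x^p)^(-1/p-1) > 0` and
`g'' = -(1+p) x^(p-1) (1 + x^p)^(-1/p-2) ≤ 0`, and `g^p = x^p / (1 + x^p)`, so
`x g'' + (1+p) g^p g' = 0`; writing `g(x) = (1 + x^(-p))^(-1/p)` shows `0 ≤ g < 1` and `g → 1`.
Rescaling the argument by `λ^N` and the value by `A` keeps all of this, and turns the ODE of `g`
into `N ξ W'' + W^p W' = 0` precisely because `A^p = N²/(N-1) = N (1+p)`.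
-/

open Set Filter Topology

noncomputable def normalizedProfile (p x : ℝ) : ℝ := x * (1 + x ^ p) ^ (-p⁻¹)

section NormalizedProfile

variable {p x : ℝ}

lemma hasDerivAt_one_add_rpow_rpow (q : ℝ) (hx : 0 < x) :
    HasDerivAt (fun y => (1 + y ^ p) ^ q) (p * x ^ (p - 1) * q * (1 + x ^ p) ^ (q - 1)) x :=
  ((Real.hasDerivAt_rpow_const (Or.inl hx.ne')).const_add 1).rpow_const
    (Or.inl (by positivity))

lemma hasDerivAt_normalizedProfile (hp : p ≠ 0) (hx : 0 < x) :
    HasDerivAt (normalizedProfile p) ((1 + x ^ p) ^ (-p⁻¹ - 1)) x := by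
  refine ((hasDerivAt_id x).mul (hasDerivAt_one_add_rpow_rpow (-p⁻¹) hx)).congr_deriv ?_
  have h1 : 0 < 1 + x ^ p := by positivity
  rw [id, Real.rpow_sub_one hx.ne', Real.rpow_sub_one h1.ne']
  field_simp
  ring

lemma hasDerivAt_deriv_normalizedProfile (hp : p ≠ 0) (hx : 0 < x) :
    HasDerivAt (deriv (normalizedProfile p))
      (-(1 + p) * x ^ (p - 1) * (1 + x ^ p) ^ (-p⁻¹ - 2)) x := by
  have hderiv : deriv (normalizedProfile p) =ᶠ[𝓝 x] fun y => (1 + y ^ p) ^ (-p⁻¹ - 1) :=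
    eventually_of_mem (Ioi_mem_nhds hx) fun y hy => (hasDerivAt_normalizedProfile hp hy).deriv
  refine (hasDerivAt_one_add_rpow_rpow (-p⁻¹ - 1) hx).congr_of_eventuallyEq hderiv
    |>.congr_deriv ?_
  rw [show -p⁻¹ - 1 - 1 = -p⁻¹ - 2 by ring]
  field_simp
  ring

lemma normalizedProfile_rpow_self (hp : p ≠ 0) (hx : 0 ≤ x) :
    normalizedProfile p x ^ p = x ^ p / (1 + x ^ p) := by
  have h1 : 0 < 1 + x ^ p := by positivity
  rw [normalizedProfile, Real.mul_rpow hx (by positivity), ← Real.rpow_mul h1.le,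
    neg_mul, inv_mul_cancel₀ hp, Real.rpow_neg_one, div_eq_mul_inv]

lemma normalizedProfile_ode (hp : p ≠ 0) (hx : 0 < x) :
    x * deriv (deriv (normalizedProfile p)) x
      + (1 + p) * normalizedProfile p x ^ p * deriv (normalizedProfile p) x = 0 := by
  have h1 : 0 < 1 + x ^ p := by positivity
  rw [(hasDerivAt_deriv_normalizedProfile hp hx).deriv, (hasDerivAt_normalizedProfile hp hx).deriv,
    normalizedProfile_rpow_self hp hx.le, Real.rpow_sub_one hx.ne',
    show -p⁻¹ - 2 = (-p⁻¹ - 1) - 1 by ring, Real.rpow_sub_one h1.ne']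
  field_simp
  ring

lemma normalizedProfile_eq_one_add_rpow_neg (hp : p ≠ 0) (hx : 0 < x) :
    normalizedProfile p x = (1 + x ^ (-p)) ^ (-p⁻¹) := by
  have hx' : x = (x ^ (-p)) ^ (-p⁻¹) := by
    rw [← Real.rpow_mul hx.le, neg_mul_neg, mul_inv_cancel₀ hp, Real.rpow_one]
  rw [normalizedProfile, hx', ← Real.mul_rpow (by positivity) (by positivity), ← hx',
    mul_add, mul_one, Real.rpow_neg hx.le, inv_mul_cancel₀ (by positivity), add_comm]

lemma normalizedProfile_nonneg (hx : 0 ≤ x) : 0 ≤ normalizedProfile p x :=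
  mul_nonneg hx (Real.rpow_nonneg (by positivity) _)

lemma normalizedProfile_lt_one (hp : 0 < p) (hx : 0 ≤ x) : normalizedProfile p x < 1 := by
  rcases hx.eq_or_lt with rfl | hx
  · simp [normalizedProfile]
  rw [normalizedProfile_eq_one_add_rpow_neg hp.ne' hx]
  exact Real.rpow_lt_one_of_one_lt_of_neg (lt_add_of_pos_right 1 (Real.rpow_pos_of_pos hx _))
    (by simpa using hp)

lemma tendsto_normalizedProfile_atTop (hp : 0 < p) :
    Tendsto (normalizedProfile p) atTop (𝓝 1) := by
  have hlim : Tendsto (fun x : ℝ => (1 + x ^ (-p)) ^ (-p⁻¹)) atTop (𝓝 ((1 + 0) ^ (-p⁻¹))) :=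
    ((tendsto_rpow_neg_atTop hp).const_add 1).rpow_const (Or.inl (by norm_num))
  rw [add_zero, Real.one_rpow] at hlim
  exact hlim.congr' <| (eventually_gt_atTop 0).mono fun x hx =>
    (normalizedProfile_eq_one_add_rpow_neg hp.ne' hx).symm

lemma continuousOn_normalizedProfile (hp : 0 < p) :
    ContinuousOn (normalizedProfile p) (Ici 0) := fun x hx =>
  have h1 : 0 < 1 + x ^ p := by have : 0 ≤ x := hx; positivity
  (continuousAt_id.mul ((continuousAt_const.add (continuousAt_id.rpow_const (Or.inr hp.le)))
    |>.rpow_const (Or.inl h1.ne'))).continuousWithinAt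

lemma contDiffOn_normalizedProfile {n : WithTop ℕ∞} :
    ContDiffOn ℝ n (normalizedProfile p) (Ioi 0) := fun x hx =>
  have hx : 0 < x := hx
  (contDiffAt_id.mul ((Real.contDiffAt_rpow_const_of_ne (by positivity)).comp x
    (contDiffAt_const.add (Real.contDiffAt_rpow_const_of_ne hx.ne')))).contDiffWithinAt

lemma strictMonoOn_normalizedProfile (hp : 0 < p) : StrictMonoOn (normalizedProfile p) (Ici 0) :=
  strictMonoOn_of_deriv_pos (convex_Ici 0) (continuousOn_normalizedProfile hp) fun x hx => by
    rw [interior_Ici, mem_Ioi] at hx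
    rw [(hasDerivAt_normalizedProfile hp.ne' hx).deriv]
    positivity

lemma concaveOn_normalizedProfile (hp : 0 < p) : ConcaveOn ℝ (Ici 0) (normalizedProfile p) := by
  refine concaveOn_of_hasDerivWithinAt2_nonpos (convex_Ici 0) (continuousOn_normalizedProfile hp)
    (f' := deriv (normalizedProfile p))
    (f'' := fun x => -(1 + p) * x ^ (p - 1) * (1 + x ^ p) ^ (-p⁻¹ - 2))
    (fun x hx => ?_) (fun x hx => ?_) (fun x hx => ?_) <;>
    simp only [interior_Ici, mem_Ioi] at hx ⊢
  · exact (hasDerivAt_normalizedProfile hp.ne' hx).differentiableAt.hasDerivAt.hasDerivWithinAt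
  · exact (hasDerivAt_deriv_normalizedProfile hp.ne' hx).hasDerivWithinAt
  · rw [neg_mul, neg_mul, neg_nonpos]
    positivity

end NormalizedProfile

section Rescaling

variable {f : ℝ → ℝ} {a c : ℝ}

lemma deriv_const_mul_comp_const_mul (a c : ℝ) (f : ℝ → ℝ) :
    deriv (fun x => a * f (c * x)) = fun x => a * c * deriv f (c * x) := by
  funext x
  rw [deriv_const_mul_field, deriv_comp_mul_left c f x, smul_eq_mul, mul_assoc]

lemma HasDerivAt.const_mul_comp_const_mul {f' x : ℝ} (hf : HasDerivAt f f' (c * x)) (a : ℝ) :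
    HasDerivAt (fun y => a * f (c * y)) (a * c * f') x := by
  simpa [mul_comm c f', mul_assoc] using (hf.comp x ((hasDerivAt_id x).const_mul c)).const_mul a

lemma StrictMonoOn.const_mul_comp_const_mul_Ici (hf : StrictMonoOn f (Ici 0)) (ha : 0 < a)
    (hc : 0 < c) : StrictMonoOn (fun x => a * f (c * x)) (Ici 0) := fun _ hx _ hy hxy =>
  mul_lt_mul_of_pos_left
    (hf (mul_nonneg hc.le hx) (mul_nonneg hc.le hy) (mul_lt_mul_of_pos_left hxy hc)) ha

lemma ConcaveOn.const_mul_comp_const_mul_Ici (hf : ConcaveOn ℝ (Ici 0) f) (ha : 0 ≤ a)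
    (hc : 0 < c) : ConcaveOn ℝ (Ici 0) (fun x => a * f (c * x)) := by
  have : ConcaveOn ℝ ((c * ·) ⁻¹' Ici 0) fun x => a * f (c * x) :=
    (hf.comp_linearMap (LinearMap.mulLeft ℝ c)).smul ha
  rwa [preimage_const_mul_Ici₀ 0 hc, zero_div] at this

lemma const_mul_comp_const_mul_ode {p k ξ : ℝ} (ha : 0 ≤ a) (hf : 0 ≤ f (c * ξ))
    (hode : c * ξ * deriv (deriv f) (c * ξ) + k * f (c * ξ) ^ p * deriv f (c * ξ) = 0) :
    a ^ p * ξ * deriv (deriv fun x => a * f (c * x)) ξ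
      + k * (a * f (c * ξ)) ^ p * deriv (fun x => a * f (c * x)) ξ = 0 := by
  rw [deriv_const_mul_comp_const_mul, deriv_const_mul_comp_const_mul, Real.mul_rpow ha hf]
  linear_combination a ^ p * a * c * hode

end Rescaling

/-- **Properties of the explicit stationary profiles `W_λ`.**
For `N ≥ 2`, `A = (N²/(N−1))^(N−1)` and `λ > 0`, the function
`W_λ(ξ) = A λ^N ξ (1+(λ^N ξ)^{1/(N−1)})^{1−N}` is continuous on `[0,∞)`, `C²` on `(0,∞)`,
vanishes at `0`, has derivative `A λ^N (1+(λ^N ξ)^{1/(N−1)})^{−N} > 0`, solves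
`N ξ W″ + W^{1/(N−1)} W′ = 0` on `(0,∞)`, is strictly increasing and concave on `[0,∞)`,
satisfies `0 ≤ W_λ < A`, and tends to `A` at infinity. -/
theorem stationary_profile_properties
    (N : ℕ) (hN : 2 ≤ N)
    (A : ℝ) (hA : A = ((N : ℝ) ^ 2 / ((N : ℝ) - 1)) ^ (N - 1))
    (lam : ℝ) (hlam : 0 < lam)
    (W : ℝ → ℝ)
    (hW : ∀ ξ : ℝ, W ξ =
      A * lam ^ N * ξ * (1 + (lam ^ N * ξ) ^ ((1 : ℝ) / ((N : ℝ) - 1))) ^ ((1 : ℝ) - N)) :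
    ContinuousOn W (Ici 0) ∧
    ContDiffOn ℝ 2 W (Ioi 0) ∧
    W 0 = 0 ∧
    (∀ ξ : ℝ, 0 < ξ →
      HasDerivAt W (A * lam ^ N * (1 + (lam ^ N * ξ) ^ ((1 : ℝ) / ((N : ℝ) - 1))) ^ (-(N : ℝ))) ξ ∧
      0 < A * lam ^ N * (1 + (lam ^ N * ξ) ^ ((1 : ℝ) / ((N : ℝ) - 1))) ^ (-(N : ℝ))) ∧
    (∀ ξ : ℝ, 0 < ξ →
      (N : ℝ) * ξ * deriv (deriv W) ξ + (W ξ) ^ ((1 : ℝ) / ((N : ℝ) - 1)) * deriv W ξ = 0) ∧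
    StrictMonoOn W (Ici 0) ∧
    ConcaveOn ℝ (Ici 0) W ∧
    (∀ ξ : ℝ, 0 ≤ ξ → 0 ≤ W ξ ∧ W ξ < A) ∧
    Tendsto W atTop (nhds A) := by
  have hcast : ((N - 1 : ℕ) : ℝ) = N - 1 := by rw [Nat.cast_sub (by omega), Nat.cast_one]
  have hN1 : (0 : ℝ) < N - 1 := by rw [← hcast]; exact_mod_cast (by omega : 0 < N - 1)
  set p : ℝ := 1 / ((N : ℝ) - 1) with hp_def
  set c : ℝ := lam ^ N
  have hp : 0 < p := by positivity
  have hpinv : p⁻¹ = N - 1 := by rw [hp_def, one_div, inv_inv]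
  have hc : 0 < c := by positivity
  have hA0 : 0 < A := hA ▸ by positivity
  have hAp : A ^ p = N * (1 + p) := by
    rw [hA, hp_def, ← hcast, one_div, Real.pow_rpow_inv_natCast (by positivity) (by omega), hcast]
    field_simp
    ring
  have hWeq : W = fun ξ => A * normalizedProfile p (c * ξ) := by
    funext ξ
    rw [hW, normalizedProfile, hpinv, neg_sub]
    ring
  subst hWeq
  refine ⟨?_, ?_, by simp [normalizedProfile], fun ξ hξ => ⟨?_, by positivity⟩, fun ξ hξ => ?_,
    (strictMonoOn_normalizedProfile hp).const_mul_comp_const_mul_Ici hA0 hc,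
    (concaveOn_normalizedProfile hp).const_mul_comp_const_mul_Ici hA0.le hc,
    fun ξ hξ => ?_, ?_⟩
  · exact continuousOn_const.mul ((continuousOn_normalizedProfile hp).comp
      (continuousOn_const.mul continuousOn_id) fun x hx => mul_nonneg hc.le hx)
  · exact contDiffOn_const.mul (contDiffOn_normalizedProfile.comp
      (contDiffOn_const.mul contDiffOn_id) fun x hx => mul_pos hc hx)
  · convert (hasDerivAt_normalizedProfile hp.ne' (mul_pos hc hξ)).const_mul_comp_const_mul A
      using 3
    rw [hpinv]
    ring
  · have hode := const_mul_comp_const_mul_ode hA0.le (normalizedProfile_nonneg (mul_pos hc hξ).le)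
      (normalizedProfile_ode hp.ne' (mul_pos hc hξ))
    rw [hAp] at hode
    refine mul_left_cancel₀ (by positivity : (1 + p) ≠ 0) ?_
    linear_combination hode
  · have hx : 0 ≤ c * ξ := mul_nonneg hc.le hξ
    exact ⟨mul_nonneg hA0.le (normalizedProfile_nonneg hx),
      by simpa using mul_lt_mul_of_pos_left (normalizedProfile_lt_one hp hx) hA0⟩
  · simpa using ((tendsto_normalizedProfile_atTop hp).comp (tendsto_id.const_mul_atTop hc)).const_mul A
end

section
/- Let N ≥ 2 be an integer and A := (N²/(N−1))^{N−1}. Suppose W : [0,∞) → ℝ is nonnegative, continuous on [0,∞), twice continuously differentiable on (0,∞), satisfies N ξ W″(ξ) + W(ξ)^{1/(N−1)} W′(ξ) = 0 for all ξ > 0, W(0) = 0, and W is not identically zero. Then there exists λ > 0 such that W(ξ) = A λ^N ξ (1 + (λ^N ξ)^{1/(N−1)})^{1−N} for all ξ ∈ [0,∞). -/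
/-!
With `q = 1/(N-1)` and `c = (N-1)/N²`, the left side of the equation is `N` times the derivative
of the energy `ξ W' - W + c W^(1+q)`, so the energy is a constant `C`. Since `W → 0` at `0⁺`, also
`ξ W' → C`, and a bounded `W` leaves no room for `C ≠ 0` (it would make `W ≈ C log ξ`). The
first-order equation `ξ W' = W - c W^(1+q)` keeps `W` positive once it is positive somewhere (a
Grönwall-type bound), and then `(W^(-q) - c) ξ^q` is a constant `K`, positive because `W^(-q) → ∞`
at `0⁺`. Solving for `W` gives `W_λ` with `λ^N = (c/K)^(N-1)`.
-/

open Set Filter Topology Real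

theorem eq_of_hasDerivAt_zero_of_pos {f : ℝ → ℝ} (hf : ∀ x > 0, HasDerivAt f 0 x)
    {x y : ℝ} (hx : 0 < x) (hy : 0 < y) : f x = f y :=
  isOpen_Ioi.is_const_of_deriv_eq_zero isPreconnected_Ioi
    (fun z hz => (hf z hz).differentiableAt.differentiableWithinAt)
    (fun z hz => (hf z hz).deriv) hx hy

theorem tendsto_half_nhdsGT_zero : Tendsto (fun x : ℝ => x / 2) (𝓝[>] 0) (𝓝[>] 0) :=
  tendsto_nhdsWithin_iff.2
    ⟨((continuous_id.div_const 2).tendsto' 0 0 (by simp)).mono_left nhdsWithin_le_nhds,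
      eventually_nhdsWithin_of_forall fun _ hx => mem_Ioi.2 (half_pos hx)⟩

theorem eq_zero_of_tendsto_mul_deriv {f : ℝ → ℝ} {L C : ℝ}
    (hf : ∀ x > 0, HasDerivAt f (deriv f x) x)
    (hL : Tendsto f (𝓝[>] 0) (𝓝 L))
    (hC : Tendsto (fun x => x * deriv f x) (𝓝[>] 0) (𝓝 C)) : C = 0 := by
  -- Cauchy's mean value theorem for `f` against `log` on `[x/2, x]`
  have hmvt : ∀ x > 0, ∃ s ∈ Ioo (x / 2) x, log 2 * (s * deriv f s) = f x - f (x / 2) := by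
    intro x hx
    have hpos : ∀ s ∈ Icc (x / 2) x, 0 < s := fun s hs => (half_pos hx).trans_le hs.1
    obtain ⟨s, hs, h⟩ := exists_ratio_hasDerivAt_eq_ratio_slope f (deriv f) (half_lt_self hx)
      (fun s hs => (hf s (hpos s hs)).continuousAt.continuousWithinAt)
      (fun s hs => hf s (hpos s (Ioo_subset_Icc_self hs))) log (fun s => s⁻¹)
      (fun s hs => (continuousAt_log (hpos s hs).ne').continuousWithinAt)
      (fun s hs => hasDerivAt_log (hpos s (Ioo_subset_Icc_self hs)).ne')
    have hs_pos := hpos s (Ioo_subset_Icc_self hs)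
    rw [← log_div hx.ne' (half_pos hx).ne', div_div_cancel₀ hx.ne'] at h
    refine ⟨s, hs, ?_⟩
    field_simp at h
    linarith
  choose! s hs hfs using hmvt
  have hs0 : Tendsto s (𝓝[>] 0) (𝓝[>] 0) := by
    refine tendsto_nhdsWithin_iff.2 ⟨?_, ?_⟩
    · refine tendsto_of_tendsto_of_tendsto_of_le_of_le'
        (tendsto_nhdsWithin_iff.1 tendsto_half_nhdsGT_zero).1 nhdsWithin_le_nhds ?_ ?_
      all_goals filter_upwards [self_mem_nhdsWithin] with x hx
      exacts [(hs x hx).1.le, (hs x hx).2.le]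
    · filter_upwards [self_mem_nhdsWithin] with x hx
      exact (half_pos hx).trans (hs x hx).1
  have hlim : Tendsto (fun x => f x - f (x / 2)) (𝓝[>] 0) (𝓝 (log 2 * C)) :=
    ((hC.comp hs0).const_mul (log 2)).congr' <| by
      filter_upwards [self_mem_nhdsWithin] with x hx using hfs x hx
  have h := tendsto_nhds_unique hlim (hL.sub (hL.comp tendsto_half_nhdsGT_zero))
  rw [sub_self] at h
  exact (mul_eq_zero.1 h).resolve_left (log_pos one_lt_two).ne'

theorem hasDerivAt_energy {W : ℝ → ℝ} {a r ξ : ℝ} (ha : a ≠ 0) (hr : 0 ≤ r)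
    (hW : HasDerivAt W (deriv W ξ) ξ) (hW' : HasDerivAt (deriv W) (deriv (deriv W) ξ) ξ) :
    HasDerivAt (fun x => x * deriv W x - W x + (a * (1 + r))⁻¹ * W x ^ (1 + r))
      ((a * ξ * deriv (deriv W) ξ + W ξ ^ r * deriv W ξ) / a) ξ := by
  have hpow := (hW.rpow_const (p := 1 + r) (Or.inr (by linarith))).const_mul (a * (1 + r))⁻¹
  refine ((((hasDerivAt_id ξ).mul hW').sub hW).add hpow).congr_deriv ?_
  rw [add_sub_cancel_left, id]
  field_simp
  ring

theorem mul_deriv_eq_of_ode {W : ℝ → ℝ} {a r : ℝ} (ha : 0 < a) (hr : 0 ≤ r)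
    (hW : ∀ ξ > 0, HasDerivAt W (deriv W ξ) ξ)
    (hW' : ∀ ξ > 0, HasDerivAt (deriv W) (deriv (deriv W) ξ) ξ)
    (hode : ∀ ξ > 0, a * ξ * deriv (deriv W) ξ + W ξ ^ r * deriv W ξ = 0)
    (hW0 : Tendsto W (𝓝[>] 0) (𝓝 0)) (ξ : ℝ) (hξ : 0 < ξ) :
    ξ * deriv W ξ = W ξ - (a * (1 + r))⁻¹ * W ξ ^ (1 + r) := by
  set E := fun x => x * deriv W x - W x + (a * (1 + r))⁻¹ * W x ^ (1 + r)
  have hE : ∀ x > 0, HasDerivAt E 0 x := fun x hx =>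
    (hasDerivAt_energy ha.ne' hr (hW x hx) (hW' x hx)).congr_deriv (by rw [hode x hx, zero_div])
  have hlim : Tendsto (fun x => x * deriv W x) (𝓝[>] 0) (𝓝 (E 1)) := by
    have hpow : Tendsto (fun x => W x ^ (1 + r)) (𝓝[>] 0) (𝓝 0) := by
      simpa [zero_rpow (by linarith : 1 + r ≠ 0)] using
        hW0.rpow_const (p := 1 + r) (Or.inr (by linarith))
    have := (tendsto_const_nhds (x := E 1)).add (hW0.sub (hpow.const_mul (a * (1 + r))⁻¹))
    simp only [mul_zero, sub_zero, add_zero] at this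
    refine this.congr' ?_
    filter_upwards [self_mem_nhdsWithin] with x hx
    have := eq_of_hasDerivAt_zero_of_pos hE hx one_pos
    simp only [E] at this ⊢
    linarith
  have hE0 : E ξ = 0 :=
    (eq_of_hasDerivAt_zero_of_pos hE hξ one_pos).trans (eq_zero_of_tendsto_mul_deriv hW hW0 hlim)
  simp only [E] at hE0
  linarith

theorem antitoneOn_div_of_mul_deriv_le {f : ℝ → ℝ} (hf : ∀ x > 0, HasDerivAt f (deriv f x) x)
    (hle : ∀ x > 0, x * deriv f x ≤ f x) : AntitoneOn (fun x => f x / x) (Ioi 0) := by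
  have hd : ∀ x > 0, HasDerivAt (fun x => f x / x) ((deriv f x * x - f x * 1) / x ^ 2) x :=
    fun x hx => (hf x hx).div (hasDerivAt_id' x) hx.ne'
  refine antitoneOn_of_hasDerivWithinAt_nonpos
    (f' := fun x => (deriv f x * x - f x * 1) / x ^ 2) (convex_Ioi 0)
    (fun x hx => (hd x hx).continuousAt.continuousWithinAt) (fun x hx => ?_) (fun x hx => ?_)
  · rw [interior_Ioi] at hx ⊢
    exact (hd x hx).hasDerivWithinAt
  · rw [interior_Ioi] at hx
    refine div_nonpos_of_nonpos_of_nonneg ?_ (sq_nonneg x)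
    linarith [hle x hx]

theorem monotoneOn_mul_exp_of_neg_mul_le_deriv {f : ℝ → ℝ} {a b B : ℝ}
    (hf : ContinuousOn f (Icc a b)) (hf' : ∀ x ∈ Ioo a b, HasDerivAt f (deriv f x) x)
    (hle : ∀ x ∈ Ioo a b, -(B * f x) ≤ deriv f x) :
    MonotoneOn (fun x => f x * exp (B * x)) (Icc a b) := by
  have hexp : ∀ x, HasDerivAt (fun x => exp (B * x)) (exp (B * x) * B) x := fun x => by
    simpa using ((hasDerivAt_id x).const_mul B).exp
  refine monotoneOn_of_hasDerivWithinAt_nonneg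
    (f' := fun x => deriv f x * exp (B * x) + f x * (exp (B * x) * B)) (convex_Icc a b)
    (hf.mul (continuous_exp.comp (continuous_const_mul B)).continuousOn)
    (fun x hx => ?_) (fun x hx => ?_)
  · rw [interior_Icc] at hx ⊢
    exact ((hf' x hx).mul (hexp x)).hasDerivWithinAt
  · rw [interior_Icc] at hx
    have := hle x hx
    have := exp_pos (B * x)
    nlinarith

section FirstOrder

variable {W : ℝ → ℝ} {c r : ℝ}

theorem pos_of_mul_deriv_eq (hc : 0 ≤ c) (hr : 0 ≤ r)
    (hW : ∀ ξ > 0, HasDerivAt W (deriv W ξ) ξ) (hnonneg : ∀ ξ > 0, 0 ≤ W ξ)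
    (hfirst : ∀ ξ > 0, ξ * deriv W ξ = W ξ - c * W ξ ^ (1 + r))
    {ξ₀ : ℝ} (hξ₀ : 0 < ξ₀) (hWξ₀ : 0 < W ξ₀) {ξ : ℝ} (hξ : 0 < ξ) : 0 < W ξ := by
  rcases le_total ξ ξ₀ with hle | hle
  · have hanti := antitoneOn_div_of_mul_deriv_le hW fun x hx => by
      rw [hfirst x hx]
      nlinarith [rpow_nonneg (hnonneg x hx) (1 + r)]
    have h := hanti hξ hξ₀ hle
    exact (div_pos_iff_of_pos_right hξ).1 ((div_pos hWξ₀ hξ₀).trans_le h)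
  · have hcont : ContinuousOn W (Icc ξ₀ ξ) := fun x hx =>
      (hW x (hξ₀.trans_le hx.1)).continuousAt.continuousWithinAt
    obtain ⟨M, hM⟩ := isCompact_Icc.exists_bound_of_continuousOn hcont
    have hM0 : 0 ≤ M := (norm_nonneg _).trans (hM ξ₀ (left_mem_Icc.2 hle))
    have hmono := monotoneOn_mul_exp_of_neg_mul_le_deriv (B := c * M ^ r / ξ₀) hcont
      (fun x hx => hW x (hξ₀.trans hx.1)) fun x hx => by
        have hx0 : 0 < x := hξ₀.trans hx.1
        have hW0 := hnonneg x hx0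
        have hWM : W x ≤ M := (le_abs_self _).trans (hM x (Ioo_subset_Icc_self hx))
        have hpow : W x ^ r ≤ M ^ r := rpow_le_rpow hW0 hWM hr
        have hsplit : W x ^ (1 + r) = W x * W x ^ r := rpow_one_add' hW0 (by linarith)
        have hP : 0 ≤ c * M ^ r * W x := by positivity
        have h1 : -(c * M ^ r * W x) ≤ deriv W x * x := by
          have := hfirst x hx0
          rw [hsplit] at this
          nlinarith [mul_le_mul_of_nonneg_left hpow (mul_nonneg hc hW0)]
        have h2 : -(c * M ^ r * W x / x) ≤ deriv W x := by
          rwa [← neg_div, div_le_iff₀ hx0]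
        calc -(c * M ^ r / ξ₀ * W x) = -(c * M ^ r * W x / ξ₀) := by ring
          _ ≤ -(c * M ^ r * W x / x) := neg_le_neg (div_le_div_of_nonneg_left hP hξ₀ hx.1.le)
          _ ≤ deriv W x := h2
    have h := hmono (left_mem_Icc.2 hle) (right_mem_Icc.2 hle) hle
    exact pos_of_mul_pos_left ((mul_pos hWξ₀ (exp_pos _)).trans_le h) (exp_pos _).le

theorem hasDerivAt_rpow_neg_sub_mul_rpow {ξ : ℝ} (hξ : 0 < ξ) (hWξ : 0 < W ξ)
    (hW : HasDerivAt W (deriv W ξ) ξ) (hfirst : ξ * deriv W ξ = W ξ - c * W ξ ^ (1 + r)) :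
    HasDerivAt (fun x => (W x ^ (-r) - c) * x ^ r) 0 ξ := by
  refine (((hW.rpow_const (p := -r) (Or.inl hWξ.ne')).sub_const c).mul
    (hasDerivAt_rpow_const (p := r) (Or.inl hξ.ne'))).congr_deriv ?_
  rw [rpow_add hWξ, rpow_one] at hfirst
  rw [rpow_sub_one hWξ.ne', rpow_sub_one hξ.ne', rpow_neg hWξ.le]
  have : 0 < W ξ ^ r := rpow_pos_of_pos hWξ r
  field_simp
  linear_combination (-(r * ξ ^ r)) * hfirst

theorem exists_rpow_neg_eq_of_mul_deriv_eq (hc : 0 < c) (hr : 0 < r)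
    (hW : ∀ ξ > 0, HasDerivAt W (deriv W ξ) ξ) (hnonneg : ∀ ξ > 0, 0 ≤ W ξ)
    (hfirst : ∀ ξ > 0, ξ * deriv W ξ = W ξ - c * W ξ ^ (1 + r))
    (hW0 : Tendsto W (𝓝[>] 0) (𝓝 0)) {ξ₀ : ℝ} (hξ₀ : 0 < ξ₀) (hWξ₀ : W ξ₀ ≠ 0) :
    ∃ μ > 0, ∀ ξ > 0, W ξ ^ (-r) = c * (1 + (μ * ξ) ^ (-r)) := by
  have hpos : ∀ ξ > 0, 0 < W ξ := fun ξ hξ =>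
    pos_of_mul_deriv_eq hc.le hr.le hW hnonneg hfirst hξ₀ ((hnonneg ξ₀ hξ₀).lt_of_ne' hWξ₀) hξ
  have hinv := fun ξ (hξ : 0 < ξ) =>
    hasDerivAt_rpow_neg_sub_mul_rpow hξ (hpos ξ hξ) (hW ξ hξ) (hfirst ξ hξ)
  have hW0' : Tendsto W (𝓝[>] 0) (𝓝[>] 0) := tendsto_nhdsWithin_iff.2
    ⟨hW0, eventually_nhdsWithin_of_forall fun ξ hξ => hpos ξ hξ⟩
  obtain ⟨ξ₁, hξ₁c, hξ₁⟩ := (((tendsto_rpow_neg_nhdsGT_zero (neg_neg_of_pos hr)).comp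
    hW0').eventually (eventually_gt_atTop c)).and self_mem_nhdsWithin |>.exists
  set K := (W ξ₁ ^ (-r) - c) * ξ₁ ^ r
  have hK : 0 < K := mul_pos (sub_pos.2 hξ₁c) (rpow_pos_of_pos hξ₁ r)
  refine ⟨(c / K) ^ (1 / r), by positivity, fun ξ hξ => ?_⟩
  have hKξ : (W ξ ^ (-r) - c) * ξ ^ r = K := eq_of_hasDerivAt_zero_of_pos hinv hξ hξ₁
  rw [mul_rpow (by positivity) hξ.le, ← rpow_mul (by positivity), one_div_mul_eq_div,
    neg_div, div_self hr.ne', rpow_neg_one, inv_div, rpow_neg hξ.le, ← hKξ]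
  have := rpow_pos_of_pos hξ r
  field_simp
  ring

end FirstOrder

theorem mul_one_add_rpow_neg_rpow_neg {p c y : ℝ} (hp : 0 < p) (hc : 0 ≤ c) (hy : 0 < y) :
    (c * (1 + y ^ (-(1 / p)))) ^ (-p) = c ^ (-p) * y * (1 + y ^ (1 / p)) ^ (-p) := by
  have hsplit : 1 + y ^ (-(1 / p)) = y ^ (-(1 / p)) * (1 + y ^ (1 / p)) := by
    rw [mul_one_add, ← rpow_add hy, neg_add_cancel, rpow_zero, add_comm]
  rw [hsplit, mul_rpow hc (by positivity), mul_rpow (by positivity) (by positivity),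
    ← rpow_mul hy.le, neg_mul_neg, one_div_mul_cancel hp.ne', rpow_one, mul_assoc]

theorem ContDiffOn.hasDerivAt_and_hasDerivAt_deriv {f : ℝ → ℝ} {s : Set ℝ}
    (hf : ContDiffOn ℝ 2 f s) (hs : IsOpen s) {x : ℝ} (hx : x ∈ s) :
    HasDerivAt f (deriv f x) x ∧ HasDerivAt (deriv f) (deriv (deriv f) x) x :=
  ⟨((hf.differentiableOn (by norm_num)).differentiableAt (hs.mem_nhds hx)).hasDerivAt,
    (((hf.deriv_of_isOpen hs (m := 1) (by norm_num)).differentiableOn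
      one_ne_zero).differentiableAt (hs.mem_nhds hx)).hasDerivAt⟩

theorem sq_div_sub_one_pow_sub_one {N : ℕ} (hN : 1 < N) :
    ((N : ℝ) ^ 2 / ((N : ℝ) - 1)) ^ (N - 1) =
      ((N * (1 + 1 / ((N : ℝ) - 1)))⁻¹) ^ (-((N : ℝ) - 1)) := by
  have hN1 : (0 : ℝ) < N - 1 := sub_pos.2 (by exact_mod_cast hN)
  have hsq : (N : ℝ) ^ 2 / ((N : ℝ) - 1) = N * (1 + 1 / ((N : ℝ) - 1)) := by
    field_simp
    ring
  have hpos : 0 ≤ (N : ℝ) * (1 + 1 / ((N : ℝ) - 1)) := hsq ▸ div_nonneg (sq_nonneg _) hN1.le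
  rw [hsq, ← rpow_natCast, Nat.cast_sub hN.le, Nat.cast_one, rpow_neg (inv_nonneg.2 hpos),
    inv_rpow hpos, inv_inv]

/-- **Uniqueness up to dilation of stationary profiles.**
If `W : [0,∞) → ℝ` is nonnegative, continuous on `[0,∞)`, `C²` on `(0,∞)`, solves
`N ξ W″ + W^{1/(N−1)} W′ = 0` on `(0,∞)`, vanishes at `0` and is not identically zero,
then `W = W_λ` for some `λ > 0`, where
`W_λ(ξ) = A λ^N ξ (1+(λ^N ξ)^{1/(N−1)})^{1−N}` and `A = (N²/(N−1))^(N−1)`. -/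
theorem stationary_profile_uniqueness
    (N : ℕ) (hN : 2 ≤ N)
    (A : ℝ) (hA : A = ((N : ℝ) ^ 2 / ((N : ℝ) - 1)) ^ (N - 1))
    (W : ℝ → ℝ)
    (hnonneg : ∀ ξ : ℝ, 0 ≤ ξ → 0 ≤ W ξ)
    (hcont : ContinuousOn W (Ici 0))
    (hC2 : ContDiffOn ℝ 2 W (Ioi 0))
    (hODE : ∀ ξ : ℝ, 0 < ξ →
      (N : ℝ) * ξ * deriv (deriv W) ξ + (W ξ) ^ ((1 : ℝ) / ((N : ℝ) - 1)) * deriv W ξ = 0)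
    (hW0 : W 0 = 0)
    (hne : ∃ ξ : ℝ, 0 ≤ ξ ∧ W ξ ≠ 0) :
    ∃ lam : ℝ, 0 < lam ∧ ∀ ξ : ℝ, 0 ≤ ξ →
      W ξ = A * lam ^ N * ξ *
        (1 + (lam ^ N * ξ) ^ ((1 : ℝ) / ((N : ℝ) - 1))) ^ ((1 : ℝ) - N) := by
  rw [sq_div_sub_one_pow_sub_one (by omega)] at hA
  set p : ℝ := N - 1
  have hp : 0 < p := sub_pos.2 (by exact_mod_cast hN)
  set c := ((N : ℝ) * (1 + 1 / p))⁻¹ -- `= (N - 1) / N²`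
  have hc : 0 < c := by positivity
  have hW : ∀ ξ > 0, HasDerivAt W (deriv W ξ) ξ := fun ξ hξ =>
    (hC2.hasDerivAt_and_hasDerivAt_deriv isOpen_Ioi hξ).1
  have hW' : ∀ ξ > 0, HasDerivAt (deriv W) (deriv (deriv W) ξ) ξ := fun ξ hξ =>
    (hC2.hasDerivAt_and_hasDerivAt_deriv isOpen_Ioi hξ).2
  have hlim : Tendsto W (𝓝[>] 0) (𝓝 0) := by
    simpa only [hW0] using
      (hcont 0 self_mem_Ici).tendsto.mono_left (nhdsWithin_mono 0 Ioi_subset_Ici_self)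
  have hfirst := mul_deriv_eq_of_ode (by positivity) (by positivity) hW hW' hODE hlim
  obtain ⟨ξ₀, hξ₀, hWξ₀⟩ := hne
  obtain ⟨μ, hμ, hWμ⟩ := exists_rpow_neg_eq_of_mul_deriv_eq hc (by positivity) hW
    (fun ξ hξ => hnonneg ξ hξ.le) hfirst hlim (hξ₀.lt_of_ne (by rintro rfl; exact hWξ₀ hW0)) hWξ₀
  refine ⟨μ ^ (1 / (N : ℝ)), by positivity, fun ξ hξ => ?_⟩
  rw [← rpow_natCast, ← rpow_mul hμ.le, one_div_mul_cancel (by positivity), rpow_one,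
    show (1 : ℝ) - N = -p by ring]
  rcases hξ.eq_or_lt with rfl | hξ
  · simp [hW0]
  · rw [hA, mul_assoc _ μ, ← mul_one_add_rpow_neg_rpow_neg hp hc.le (mul_pos hμ hξ),
      ← hWμ ξ hξ, ← rpow_mul (hnonneg ξ hξ.le), neg_mul_neg, one_div_mul_cancel hp.ne', rpow_one]
end

section
/- Let N ≥ 2 be an integer. Suppose f : [0,∞) → ℝ is nonnegative, continuous on [0,∞), continuously differentiable on (0,∞), not identically zero, f(0) = 0, and satisfies (N−1) ξ f′(ξ) = f(ξ)·(1 − ((N−1)/N²) f(ξ)) for all ξ > 0. Then there exists λ > 0 such that f(ξ) = (N²/(N−1)) · (λ^N ξ)^{1/(N−1)} / (1 + (λ^N ξ)^{1/(N−1)}) for all ξ ≥ 0; in particular 0 < f(ξ) < N²/(N−1) for all ξ > 0. -/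
/-!
With `M = N²/(N-1)` the equation reads `ξ f' = f (1 - f/M) / (N-1)`, which in the time `log ξ`
is an autonomous logistic equation with a locally Lipschitz vector field. By uniqueness, a
solution that meets one of the equilibria `0`, `M` at some `ξ > 0` is constant on `(0, ∞)`.
`f ≢ 0` excludes `0`; and `f ≥ M` somewhere would, by the intermediate value theorem, give
`f = M` somewhere, contradicting continuity at `0` where `f(0) = 0`. So
`0 < f < M`, and `q = f/(M - f)` solves the linear equation `ξ q' = q/(N-1)`, whence
`q(ξ) = q(1) ξ^{1/(N-1)}`; solving for `f` gives the formula with `λ^N = q(1)^{N-1}`.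
-/

open Set Real Filter Topology

theorem ODE_solution_eq_of_apply_eq_zero {E : Type*} [NormedAddCommGroup E] [NormedSpace ℝ E]
    {F : E → E} (hF : LocallyLipschitz F) {g : ℝ → E} (hg : ∀ t, HasDerivAt g (F (g t)) t)
    {r : E} (hr : F r = 0) {t₀ : ℝ} (h₀ : g t₀ = r) (t : ℝ) : g t = r := by
  have ht : t ∈ Ioo (min t t₀ - 1) (max t t₀ + 1) := by constructor <;> grind
  have ht₀ : t₀ ∈ Ioo (min t t₀ - 1) (max t t₀ + 1) := by constructor <;> grind
  have hs : IsCompact (insert r (g '' Icc (min t t₀ - 1) (max t t₀ + 1))) :=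
    (isCompact_Icc.image_of_continuousOn
      fun s _ ↦ (hg s).continuousAt.continuousWithinAt).insert r
  obtain ⟨K, hK⟩ := hF.locallyLipschitzOn.exists_lipschitzOnWith_of_compact hs
  exact ODE_solution_unique_of_mem_Ioo (v := fun _ ↦ F) (fun _ _ ↦ hK) ht₀
    (fun s hs ↦ ⟨hg s, mem_insert_of_mem r (mem_image_of_mem g (Ioo_subset_Icc_self hs))⟩)
    (fun s _ ↦ ⟨hr ▸ hasDerivAt_const s r, mem_insert r _⟩) h₀ ht

theorem eq_of_hasDerivAt_inv_smul_of_apply_eq_zero {E : Type*} [NormedAddCommGroup E]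
    [NormedSpace ℝ E] {F : E → E} (hF : LocallyLipschitz F) {f : ℝ → E}
    (hf : ∀ ξ, 0 < ξ → HasDerivAt f (ξ⁻¹ • F (f ξ)) ξ) {r : E} (hr : F r = 0) {ξ₀ : ℝ}
    (hξ₀ : 0 < ξ₀) (h₀ : f ξ₀ = r) {ξ : ℝ} (hξ : 0 < ξ) : f ξ = r := by
  have hg : ∀ t, HasDerivAt (f ∘ exp) (F ((f ∘ exp) t)) t := fun t ↦ by
    simpa [smul_smul, (exp_pos t).ne'] using
      (hf _ (exp_pos t)).scomp t (hasDerivAt_exp t)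
  simpa [exp_log hξ] using
    ODE_solution_eq_of_apply_eq_zero hF hg hr (t₀ := log ξ₀) (by simpa [exp_log hξ₀])
      (log ξ)

theorem eq_mul_rpow_of_hasDerivAt {q : ℝ → ℝ} {a : ℝ}
    (hq : ∀ ξ, 0 < ξ → HasDerivAt q (a * q ξ / ξ) ξ) {ξ : ℝ} (hξ : 0 < ξ) :
    q ξ = q 1 * ξ ^ a := by
  have hderiv : ∀ x, 0 < x → HasDerivAt (fun x ↦ q x * x ^ (-a)) 0 x := fun x hx ↦ by
    refine ((hq x hx).mul (hasDerivAt_rpow_const (p := -a) (Or.inl hx.ne'))).congr_deriv ?_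
    rw [rpow_sub_one hx.ne']
    field_simp
    ring
  have hconst := isOpen_Ioi.is_const_of_deriv_eq_zero isPreconnected_Ioi
    (fun x hx ↦ (hderiv x hx).differentiableAt.differentiableWithinAt)
    (fun x hx ↦ (hderiv x hx).deriv) (mem_Ioi.2 hξ) (mem_Ioi.2 one_pos)
  simp only [one_rpow, mul_one] at hconst
  rw [← hconst, mul_assoc, ← rpow_add hξ, neg_add_cancel, rpow_zero, mul_one]

theorem exists_pow_mul_rpow_eq {E p : ℝ} (hE : 0 < E) (hp : p ≠ 0) {N : ℕ} (hN : N ≠ 0) :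
    ∃ lam : ℝ, 0 < lam ∧ ∀ ξ : ℝ, 0 ≤ ξ → (lam ^ N * ξ) ^ p = E * ξ ^ p := by
  refine ⟨E ^ (1 / (p * N)), by positivity, fun ξ hξ ↦ ?_⟩
  have hexp : 1 / (p * N) * N * p = 1 := by field_simp
  rw [mul_rpow (by positivity) hξ, ← rpow_natCast, ← rpow_mul hE.le, ← rpow_mul hE.le, hexp,
    rpow_one]

section Logistic

variable {M d : ℝ} {f : ℝ → ℝ}
  (hf : ∀ ξ, 0 < ξ → HasDerivAt f (f ξ * (1 - f ξ / M) / (d * ξ)) ξ)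
include hf

theorem logistic_eq_const_of_eq_equilibrium {r : ℝ} (hr : r * (1 - r / M) = 0) {ξ₀ : ℝ}
    (hξ₀ : 0 < ξ₀) (h₀ : f ξ₀ = r) {ξ : ℝ} (hξ : 0 < ξ) : f ξ = r := by
  have hF : ContDiff ℝ 1 fun x : ℝ ↦ x * (1 - x / M) / d := by fun_prop
  refine eq_of_hasDerivAt_inv_smul_of_apply_eq_zero hF.locallyLipschitz
    (fun η hη ↦ (hf η hη).congr_deriv ?_) (by simp [hr]) hξ₀ h₀ hξ
  rw [smul_eq_mul]
  ring

theorem logistic_pos (hnonneg : ∀ ξ, 0 < ξ → 0 ≤ f ξ) (hne : ∃ ξ, 0 < ξ ∧ f ξ ≠ 0)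
    {ξ : ℝ} (hξ : 0 < ξ) : 0 < f ξ := by
  refine (hnonneg ξ hξ).lt_of_ne' fun h₀ ↦ ?_
  obtain ⟨η, hη, hfη⟩ := hne
  exact hfη (logistic_eq_const_of_eq_equilibrium hf (by ring) hξ h₀ hη)

theorem logistic_lt_capacity (hM : 0 < M) (hcont : ContinuousOn f (Ici 0)) (hf0 : f 0 = 0)
    {ξ : ℝ} (hξ : 0 < ξ) : f ξ < M := by
  by_contra! hle
  obtain ⟨ξ₁, hξ₁, hfξ₁⟩ := intermediate_value_Icc hξ.le (hcont.mono Icc_subset_Ici_self)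
    (by rw [hf0]; exact ⟨hM.le, hle⟩ : M ∈ Icc (f 0) (f ξ))
  have hξ₁ : 0 < ξ₁ := hξ₁.1.lt_of_ne (by rintro rfl; exact hM.ne (hf0 ▸ hfξ₁))
  have hconst : EqOn f (fun _ ↦ M) (Ioi 0) := fun η hη ↦
    logistic_eq_const_of_eq_equilibrium hf (by field_simp; ring) hξ₁ hfξ₁ hη
  have hlim₀ : Tendsto f (𝓝[>] 0) (𝓝 (f 0)) :=
    (hcont 0 (mem_Ici.2 le_rfl)).tendsto.mono_left (nhdsWithin_mono _ Ioi_subset_Ici_self)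
  have hlimM : Tendsto f (𝓝[>] 0) (𝓝 M) :=
    tendsto_const_nhds.congr' (eventuallyEq_nhdsWithin_of_eqOn hconst).symm
  exact hM.ne (hf0 ▸ tendsto_nhds_unique hlim₀ hlimM)

theorem logistic_ratio_hasDerivAt (hM : M ≠ 0) {ξ : ℝ} (hξ : 0 < ξ) (hfM : f ξ ≠ M) :
    HasDerivAt (fun x ↦ f x / (M - f x)) (1 / d * (f ξ / (M - f ξ)) / ξ) ξ := by
  have hMf : M - f ξ ≠ 0 := sub_ne_zero.2 hfM.symm
  refine ((hf ξ hξ).div ((hasDerivAt_const ξ M).sub (hf ξ hξ)) hMf).congr_deriv ?_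
  simp only [Pi.sub_apply]
  field_simp
  ring

theorem exists_logistic_eq_closed_form (hM : 0 < M) (hpos : ∀ ξ, 0 < ξ → 0 < f ξ)
    (hlt : ∀ ξ, 0 < ξ → f ξ < M) :
    ∃ E : ℝ, 0 < E ∧
      ∀ ξ : ℝ, 0 < ξ → f ξ = M * (E * ξ ^ (1 / d)) / (1 + E * ξ ^ (1 / d)) := by
  refine ⟨f 1 / (M - f 1), div_pos (hpos 1 one_pos) (sub_pos.2 (hlt 1 one_pos)),
    fun ξ hξ ↦ ?_⟩
  have hq := eq_mul_rpow_of_hasDerivAt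
    (fun x hx ↦ logistic_ratio_hasDerivAt hf hM.ne' hx (hlt x hx).ne) hξ
  rw [← hq]
  have hMf := sub_pos.2 (hlt ξ hξ)
  field_simp
  rw [sub_add_cancel, mul_div_cancel_right₀ _ hM.ne']

end Logistic

/-- **Solution of the logistic-type first-order ODE.**
If `f : [0,∞) → ℝ` is nonnegative, continuous on `[0,∞)`, `C¹` on `(0,∞)`, not identically
zero, `f(0) = 0`, and `(N−1) ξ f′ = f (1 − ((N−1)/N²) f)` on `(0,∞)`, then for some `λ > 0`,
`f(ξ) = (N²/(N−1)) (λ^N ξ)^{1/(N−1)} / (1 + (λ^N ξ)^{1/(N−1)})`; in particular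
`0 < f(ξ) < N²/(N−1)` for `ξ > 0`. -/
theorem logistic_ode_solution
    (N : ℕ) (hN : 2 ≤ N)
    (f : ℝ → ℝ)
    (hnonneg : ∀ ξ : ℝ, 0 ≤ ξ → 0 ≤ f ξ)
    (hcont : ContinuousOn f (Ici 0))
    (hC1 : ContDiffOn ℝ 1 f (Ioi 0))
    (hne : ∃ ξ : ℝ, 0 ≤ ξ ∧ f ξ ≠ 0)
    (hf0 : f 0 = 0)
    (hODE : ∀ ξ : ℝ, 0 < ξ →
      ((N : ℝ) - 1) * ξ * deriv f ξ = f ξ * (1 - (((N : ℝ) - 1) / (N : ℝ) ^ 2) * f ξ)) :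
    ∃ lam : ℝ, 0 < lam ∧
      (∀ ξ : ℝ, 0 ≤ ξ →
        f ξ = ((N : ℝ) ^ 2 / ((N : ℝ) - 1)) * (lam ^ N * ξ) ^ ((1 : ℝ) / ((N : ℝ) - 1))
          / (1 + (lam ^ N * ξ) ^ ((1 : ℝ) / ((N : ℝ) - 1)))) ∧
      (∀ ξ : ℝ, 0 < ξ → 0 < f ξ ∧ f ξ < (N : ℝ) ^ 2 / ((N : ℝ) - 1)) := by
  have hd : (0 : ℝ) < N - 1 := by
    have : (2 : ℝ) ≤ N := by exact_mod_cast hN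
    linarith
  set M : ℝ := (N : ℝ) ^ 2 / ((N : ℝ) - 1)
  have hM : 0 < M := by positivity
  have hf (ξ : ℝ) (hξ : 0 < ξ) :
      HasDerivAt f (f ξ * (1 - f ξ / M) / ((N - 1) * ξ)) ξ := by
    refine ((hC1.differentiableOn one_ne_zero ξ hξ).differentiableAt
      (Ioi_mem_nhds hξ)).hasDerivAt.congr_deriv ?_
    rw [eq_div_iff (by positivity), div_div_eq_mul_div]
    linear_combination hODE ξ hξ
  have hne' : ∃ ξ, 0 < ξ ∧ f ξ ≠ 0 := by
    obtain ⟨ξ, hξ, hfξ⟩ := hne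
    exact ⟨ξ, hξ.lt_of_ne (by rintro rfl; exact hfξ hf0), hfξ⟩
  have hpos (ξ : ℝ) (hξ : 0 < ξ) : 0 < f ξ :=
    logistic_pos hf (fun η hη ↦ hnonneg η hη.le) hne' hξ
  have hlt (ξ : ℝ) (hξ : 0 < ξ) : f ξ < M := logistic_lt_capacity hf hM hcont hf0 hξ
  obtain ⟨E, hE, hsol⟩ := exists_logistic_eq_closed_form hf hM hpos hlt
  obtain ⟨lam, hlam, hpow⟩ :=
    exists_pow_mul_rpow_eq hE (one_div_ne_zero hd.ne') (by omega : N ≠ 0)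
  refine ⟨lam, hlam, fun ξ hξ ↦ ?_, fun ξ hξ ↦ ⟨hpos ξ hξ, hlt ξ hξ⟩⟩
  rcases hξ.eq_or_lt with rfl | hξ
  · rw [mul_zero, zero_rpow (one_div_ne_zero hd.ne'), hf0]
    simp
  · rw [hpow ξ hξ.le, hsol ξ hξ]
end

section
/- Let N ≥ 2 be an integer and A := (N²/(N−1))^{N−1}. For every ℓ ∈ (0,A) there is a unique λ(ℓ) > 0 such that W_{λ(ℓ)}(1) = ℓ; define φ_ℓ := W_{λ(ℓ)} restricted to [0,1]. Then for each fixed ξ ∈ (0,1], the map ℓ ↦ φ_ℓ(ξ) is strictly increasing on (0,A), and φ_ℓ(ξ) → A as ℓ ↑ A. -/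
open Set Filter Real

/-- The stationary profile `W_λ(ξ) = A λ^N ξ (1+(λ^N ξ)^{1/(N−1)})^{1−N}`,
where `A = (N²/(N−1))^(N−1)`. -/
noncomputable def Wprof (N : ℕ) (lam ξ : ℝ) : ℝ :=
  ((N : ℝ) ^ 2 / ((N : ℝ) - 1)) ^ (N - 1) * lam ^ N * ξ *
    (1 + (lam ^ N * ξ) ^ ((1 : ℝ) / ((N : ℝ) - 1))) ^ ((1 : ℝ) - N)

namespace ProfAux

variable {N : ℕ}

lemma cast_sub_one (hN : 2 ≤ N) : ((N - 1 : ℕ) : ℝ) = (N : ℝ) - 1 := by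
  have h1 : 1 ≤ N := by omega
  push_cast [Nat.cast_sub h1]
  ring

lemma Nsub_pos (hN : 2 ≤ N) : (0:ℝ) < (N:ℝ) - 1 := by
  have : (2:ℝ) ≤ (N:ℝ) := by exact_mod_cast hN
  linarith

lemma rpow_inv_pow (hN : 2 ≤ N) {x : ℝ} (hx : 0 ≤ x) :
    (x ^ ((1:ℝ)/((N:ℝ)-1))) ^ (N-1) = x := by
  have hc := cast_sub_one hN
  have hne : (N:ℝ) - 1 ≠ 0 := (Nsub_pos hN).ne'
  rw [← Real.rpow_natCast (x ^ ((1:ℝ)/((N:ℝ)-1))) (N-1), ← Real.rpow_mul hx, hc,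
    one_div, inv_mul_cancel₀ hne, Real.rpow_one]

lemma Wprof_eq_aux (hN : 2 ≤ N) {x : ℝ} (hx : 0 < x) :
    x * (1 + x ^ ((1:ℝ)/((N:ℝ)-1))) ^ ((1:ℝ) - N)
      = (x ^ ((1:ℝ)/((N:ℝ)-1)) / (1 + x ^ ((1:ℝ)/((N:ℝ)-1)))) ^ (N - 1) := by
  have hc := cast_sub_one hN
  set u := x ^ ((1:ℝ)/((N:ℝ)-1)) with hu
  have hupos : 0 < u := Real.rpow_pos_of_pos hx _
  have h1u : (0:ℝ) < 1 + u := by linarith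
  have hxu : u ^ (N - 1) = x := rpow_inv_pow hN hx.le
  have h2 : (1 + u) ^ ((1:ℝ) - N) = (((1 + u) ^ (N - 1) : ℝ))⁻¹ := by
    rw [← Real.rpow_natCast (1+u) (N-1), ← Real.rpow_neg h1u.le, hc]
    congr 1
    ring
  rw [h2, div_pow, hxu]
  exact (div_eq_mul_inv _ _).symm

lemma Wprof_formula (hN : 2 ≤ N) {lam ξ : ℝ} (hl : 0 < lam) (hξ : 0 < ξ) :
    Wprof N lam ξ = ((N:ℝ)^2/((N:ℝ)-1))^(N-1) *
      (((lam^N*ξ) ^ ((1:ℝ)/((N:ℝ)-1))) / (1 + (lam^N*ξ) ^ ((1:ℝ)/((N:ℝ)-1)))) ^ (N-1) := by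
  have hx : 0 < lam ^ N * ξ := by positivity
  have h := Wprof_eq_aux hN hx
  unfold Wprof
  linear_combination (((N:ℝ)^2/((N:ℝ)-1))^(N-1)) * h

lemma pow_lamOf (hN : 2 ≤ N) {s : ℝ} (hs : 0 < s) :
    (s ^ (((N:ℝ)-1)/N)) ^ N = s ^ (N - 1) := by
  have hc := cast_sub_one hN
  have hN0 : (N:ℝ) ≠ 0 := Nat.cast_ne_zero.2 (by omega)
  rw [← Real.rpow_natCast (s ^ (((N:ℝ)-1)/N)) N, ← Real.rpow_mul hs.le,
    div_mul_cancel₀ _ hN0, ← hc, Real.rpow_natCast]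

lemma u_eq (hN : 2 ≤ N) {s ξ : ℝ} (hs : 0 < s) (hξ : 0 < ξ) :
    (s ^ (N-1) * ξ) ^ ((1:ℝ)/((N:ℝ)-1)) = s * ξ ^ ((1:ℝ)/((N:ℝ)-1)) := by
  have hc := cast_sub_one hN
  have hne : (N:ℝ) - 1 ≠ 0 := (Nsub_pos hN).ne'
  rw [Real.mul_rpow (by positivity) hξ.le, ← Real.rpow_natCast s (N-1),
    ← Real.rpow_mul hs.le, hc, mul_one_div, div_self hne, Real.rpow_one]

lemma frac_eq {r c : ℝ} (hr0 : 0 < r) (hr1 : r < 1) (hc : 0 < c) :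
    (r/(1-r)*c) / (1 + r/(1-r)*c) = r*c/((1-r)+r*c) := by
  have h1 : (1:ℝ) - r ≠ 0 := by linarith
  have h1' : (0:ℝ) < 1 - r := by linarith
  have h2 : (0:ℝ) < 1 + r/(1-r)*c := by
    have := mul_pos (div_pos hr0 h1') hc
    linarith
  have h3 : (0:ℝ) < (1-r)+r*c := by nlinarith
  rw [div_eq_div_iff h2.ne' h3.ne']
  field_simp

lemma frac_lt {r1 r2 c : ℝ} (h0 : 0 < r1) (h12 : r1 < r2) (h2 : r2 ≤ 1) (hc : 0 < c) :
    r1*c/((1-r1)+r1*c) < r2*c/((1-r2)+r2*c) := by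
  have hd1 : 0 < (1-r1)+r1*c := by nlinarith
  have hd2 : 0 < (1-r2)+r2*c := by nlinarith
  rw [div_lt_div_iff₀ hd1 hd2]
  nlinarith [mul_pos hc (sub_pos.2 h12)]

lemma value_formula (hN : 2 ≤ N) {A r ξ : ℝ} (hr0 : 0 < r) (hr1 : r < 1) (hξ : 0 < ξ)
    (hA : A = ((N:ℝ)^2/((N:ℝ)-1))^(N-1)) :
    Wprof N ((r/(1-r)) ^ (((N:ℝ)-1)/N)) ξ
      = A * (r * ξ^((1:ℝ)/((N:ℝ)-1)) / ((1-r) + r * ξ^((1:ℝ)/((N:ℝ)-1))))^(N-1) := by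
  have hs : 0 < r/(1-r) := div_pos hr0 (by linarith)
  have hlam : 0 < (r/(1-r)) ^ (((N:ℝ)-1)/N) := Real.rpow_pos_of_pos hs _
  have hcpos : 0 < ξ^((1:ℝ)/((N:ℝ)-1)) := Real.rpow_pos_of_pos hξ _
  rw [Wprof_formula hN hlam hξ, pow_lamOf hN hs, u_eq hN hs hξ, frac_eq hr0 hr1 hcpos, hA]

theorem main_aux
    (N : ℕ) (hN : 2 ≤ N)
    (A : ℝ) (hA : A = ((N : ℝ) ^ 2 / ((N : ℝ) - 1)) ^ (N - 1)) :
    ∃ lam : ℝ → ℝ,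
      (∀ ℓ ∈ Ioo (0:ℝ) A, 0 < lam ℓ ∧ Wprof N (lam ℓ) 1 = ℓ ∧
        (∀ lam' : ℝ, 0 < lam' → Wprof N lam' 1 = ℓ → lam' = lam ℓ)) ∧
      (∀ ξ ∈ Ioc (0:ℝ) 1,
        StrictMonoOn (fun ℓ => Wprof N (lam ℓ) ξ) (Ioo 0 A) ∧
        Tendsto (fun ℓ => Wprof N (lam ℓ) ξ) (nhdsWithin A (Iio A)) (nhds A)) := by
  have hNsub := Nsub_pos hN
  have hNR : (0:ℝ) < N := by exact_mod_cast (by omega : 0 < N)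
  have hepos : 0 < (1:ℝ)/((N:ℝ)-1) := by positivity
  have hbase : (0:ℝ) < (N:ℝ)^2/((N:ℝ)-1) := div_pos (by positivity) hNsub
  have hA0 : 0 < A := hA ▸ pow_pos hbase _
  have hm0 : N - 1 ≠ 0 := by omega
  set e : ℝ := (1:ℝ)/((N:ℝ)-1) with he
  set rf : ℝ → ℝ := fun ℓ => (ℓ/A) ^ e with hrf
  refine ⟨fun ℓ => (rf ℓ/(1 - rf ℓ)) ^ (((N:ℝ)-1)/N), ?_, ?_⟩
  · -- part 1
    intro ℓ hℓ
    have hr0 : 0 < rf ℓ := Real.rpow_pos_of_pos (div_pos hℓ.1 hA0) _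
    have hr1 : rf ℓ < 1 :=
      Real.rpow_lt_one (div_pos hℓ.1 hA0).le ((div_lt_one hA0).2 hℓ.2) hepos
    have hs0 : 0 < rf ℓ/(1 - rf ℓ) := div_pos hr0 (by linarith)
    have hval1 : Wprof N ((rf ℓ/(1 - rf ℓ)) ^ (((N:ℝ)-1)/N)) 1 = ℓ := by
      rw [value_formula hN hr0 hr1 one_pos hA, Real.one_rpow]
      have h1 : rf ℓ * 1 / ((1 - rf ℓ) + rf ℓ * 1) = rf ℓ := by
        rw [mul_one]
        have : (1 - rf ℓ) + rf ℓ = 1 := by ring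
        rw [this, div_one]
      rw [h1, hrf, rpow_inv_pow hN (div_pos hℓ.1 hA0).le, mul_div_cancel₀ _ hA0.ne']
    refine ⟨Real.rpow_pos_of_pos hs0 _, hval1, ?_⟩
    -- uniqueness
    intro lam' hlam' heq
    have hx : (0:ℝ) < lam' ^ N * 1 := by positivity
    have hform := Wprof_formula hN hlam' one_pos
    set u : ℝ := (lam' ^ N * 1) ^ e with hu
    have hu0 : 0 < u := Real.rpow_pos_of_pos hx _
    have h1u : (0:ℝ) < 1 + u := by linarith
    -- ℓ = A * (u/(1+u))^(N-1)
    rw [heq, ← hA] at hform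
    -- also ℓ = A * (rf ℓ)^(N-1)
    have hℓval : ℓ = A * (rf ℓ) ^ (N-1) := by
      rw [hrf, rpow_inv_pow hN (div_pos hℓ.1 hA0).le, mul_div_cancel₀ _ hA0.ne']
    have hpows : (u/(1+u)) ^ (N-1) = (rf ℓ) ^ (N-1) :=
      mul_left_cancel₀ hA0.ne' (by rw [← hform, ← hℓval])
    have hinj := pow_left_strictMonoOn₀ (M₀ := ℝ) hm0
    have hfrac : u/(1+u) = rf ℓ :=
      hinj.injOn (mem_Ici.2 (div_pos hu0 h1u).le) (mem_Ici.2 hr0.le) hpows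
    have hus : u = rf ℓ/(1 - rf ℓ) := by
      rw [div_eq_iff h1u.ne'] at hfrac
      rw [eq_div_iff (by linarith : (1:ℝ) - rf ℓ ≠ 0)]
      nlinarith [hfrac]
    have hpowN : lam' ^ N = ((rf ℓ/(1 - rf ℓ)) ^ (((N:ℝ)-1)/N)) ^ N := by
      rw [pow_lamOf hN hs0, ← hus, hu, mul_one]
      exact (rpow_inv_pow hN (by positivity)).symm
    have hinjN := pow_left_strictMonoOn₀ (M₀ := ℝ) (show N ≠ 0 by omega)
    exact hinjN.injOn (mem_Ici.2 hlam'.le)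
      (mem_Ici.2 (Real.rpow_pos_of_pos hs0 _).le) hpowN
  · -- part 2
    intro ξ hξ
    have hξ0 : 0 < ξ := hξ.1
    set c : ℝ := ξ ^ e with hcdef
    have hc0 : 0 < c := Real.rpow_pos_of_pos hξ0 _
    have key : ∀ ℓ ∈ Ioo (0:ℝ) A,
        Wprof N ((rf ℓ/(1 - rf ℓ)) ^ (((N:ℝ)-1)/N)) ξ
          = A * (rf ℓ * c / ((1 - rf ℓ) + rf ℓ * c)) ^ (N-1) := by
      intro ℓ hℓ
      have hr0 : 0 < rf ℓ := Real.rpow_pos_of_pos (div_pos hℓ.1 hA0) _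
      have hr1 : rf ℓ < 1 :=
        Real.rpow_lt_one (div_pos hℓ.1 hA0).le ((div_lt_one hA0).2 hℓ.2) hepos
      exact value_formula hN hr0 hr1 hξ0 hA
    constructor
    · intro ℓ1 h1 ℓ2 h2 h12
      simp only []
      rw [key ℓ1 h1, key ℓ2 h2]
      have hr01 : 0 < rf ℓ1 := Real.rpow_pos_of_pos (div_pos h1.1 hA0) _
      have hr11 : rf ℓ1 < 1 :=
        Real.rpow_lt_one (div_pos h1.1 hA0).le ((div_lt_one hA0).2 h1.2) hepos
      have hr12 : rf ℓ2 < 1 :=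
        Real.rpow_lt_one (div_pos h2.1 hA0).le ((div_lt_one hA0).2 h2.2) hepos
      have hrlt : rf ℓ1 < rf ℓ2 :=
        Real.rpow_lt_rpow (div_pos h1.1 hA0).le (by gcongr) hepos
      have hflt := frac_lt hr01 hrlt hr12.le hc0
      have hd1 : 0 < (1 - rf ℓ1) + rf ℓ1 * c := by nlinarith
      have hnn : 0 ≤ rf ℓ1 * c / ((1 - rf ℓ1) + rf ℓ1 * c) :=
        div_nonneg (by positivity) hd1.le
      exact mul_lt_mul_of_pos_left (pow_lt_pow_left₀ hflt hnn hm0) hA0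
    · -- limit
      set F : ℝ → ℝ := fun t => A * (t * c / ((1 - t) + t * c)) ^ (N-1) with hF
      have hd1 : ((1:ℝ) - 1) + 1 * c ≠ 0 := by
        simpa using hc0.ne'
      have hF1 : F 1 = A := by
        show A * ((1:ℝ) * c / ((1 - 1) + 1 * c)) ^ (N-1) = A
        rw [one_mul, show ((1:ℝ) - 1) + c = c by ring, div_self hc0.ne', one_pow, mul_one]
      have hFc : ContinuousAt F 1 := by
        apply continuousAt_const.mul
        apply ContinuousAt.pow
        exact ContinuousAt.div (by fun_prop) (by fun_prop) hd1
      have hrA : ContinuousAt rf A := by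
        apply ContinuousAt.rpow_const
        · fun_prop
        · right; positivity
      have hrfA : rf A = 1 := by
        rw [hrf]
        simp only []
        rw [div_self hA0.ne', Real.one_rpow]
      have hrt : Tendsto rf (nhdsWithin A (Iio A)) (nhds 1) := by
        rw [← hrfA]
        exact hrA.tendsto.mono_left nhdsWithin_le_nhds
      have hcomp : Tendsto (fun ℓ => F (rf ℓ)) (nhdsWithin A (Iio A)) (nhds (F 1)) :=
        hFc.tendsto.comp hrt
      rw [hF1] at hcomp
      refine hcomp.congr' ?_
      have hev1 : ∀ᶠ ℓ in nhdsWithin A (Iio A), ℓ ∈ Iio A := eventually_mem_nhdsWithin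
      have hev2 : ∀ᶠ ℓ in nhdsWithin A (Iio A), 0 < ℓ :=
        (eventually_gt_nhds hA0).filter_mono nhdsWithin_le_nhds
      filter_upwards [hev1, hev2] with ℓ hIA h0
      exact (key ℓ ⟨h0, hIA⟩).symm

end ProfAux

/-- **Monotone dependence of the Dirichlet profiles on the boundary value.**
For each `ℓ ∈ (0,A)` there is a unique `λ(ℓ) > 0` with `W_{λ(ℓ)}(1) = ℓ`; setting
`φ_ℓ := W_{λ(ℓ)}`, for each fixed `ξ ∈ (0,1]` the map `ℓ ↦ φ_ℓ(ξ)` is strictly increasing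
on `(0,A)` and `φ_ℓ(ξ) → A` as `ℓ ↑ A`. -/
theorem profiles_monotone_in_boundary_value
    (N : ℕ) (hN : 2 ≤ N)
    (A : ℝ) (hA : A = ((N : ℝ) ^ 2 / ((N : ℝ) - 1)) ^ (N - 1)) :
    ∃ lam : ℝ → ℝ,
      (∀ ℓ ∈ Ioo (0:ℝ) A, 0 < lam ℓ ∧ Wprof N (lam ℓ) 1 = ℓ ∧
        (∀ lam' : ℝ, 0 < lam' → Wprof N lam' 1 = ℓ → lam' = lam ℓ)) ∧
      (∀ ξ ∈ Ioc (0:ℝ) 1,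
        StrictMonoOn (fun ℓ => Wprof N (lam ℓ) ξ) (Ioo 0 A) ∧
        Tendsto (fun ℓ => Wprof N (lam ℓ) ξ) (nhdsWithin A (Iio A)) (nhds A)) := by
  exact ProfAux.main_aux N hN A hA
end

section
/- Let N ≥ 2 be an integer and λ > 0, and define X_λ : ℝ^N → ℝ by X_λ(x) := (N^{2N−1}/(N−1)^{N−1}) · λ^N · (1 + |λx|^{N/(N−1)})^{−N}, where |·| is the Euclidean norm. Then X_λ is integrable on ℝ^N with respect to Lebesgue measure and ∫_{ℝ^N} X_λ(x) dx = ω_N · (N²/(N−1))^{N−1}, where ω_N denotes the (N−1)-dimensional surface measure of the unit sphere S^{N−1} ⊂ ℝ^N (equivalently, ω_N = N times the Lebesgue measure of the unit ball in ℝ^N). In particular the value is independent of λ. -/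
/-!
Writing `p = N/(N-1)`, `X_λ(x) = c λ^N g(λx)` with `g(y) = (1 + |y|^p)^(-N)`, so the scaling
`x ↦ λx` removes `λ` and the mass is `c ∫ g`. On an `n`-dimensional space and for every `p > 0`,
the profile `(1 + |y|^p)^(-(n/p + 1))` has integral `|B₁|`: in polar coordinates and after the
substitution `t = r^p` the radial integral becomes `∫₀^∞ t^(k-1) (1+t)^(-(k+1)) dt` with
`k = n/p`, which is `1/k` because `(t/(1+t))^k / k` is an antiderivative. Here `n/p + 1 = N`,
and `c = N (N²/(N-1))^(N-1)`.
-/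

open Set MeasureTheory Filter Topology Real

theorem hasDerivAt_div_one_add_rpow (k : ℝ) {t : ℝ} (ht : 0 < t) :
    HasDerivAt (fun s : ℝ => (s / (1 + s)) ^ k) (k * t ^ (k - 1) * (1 + t) ^ (-(k + 1))) t := by
  have h1 : 0 < 1 + t := by linarith
  have hquot := ((hasDerivAt_id t).div ((hasDerivAt_id t).const_add 1) h1.ne').rpow_const
    (p := k) (Or.inl (div_pos ht h1).ne')
  refine hquot.congr_deriv ?_
  simp only [Pi.div_apply, id]
  rw [div_rpow ht.le h1.le, rpow_neg h1.le, show k + 1 = (k - 1) + 2 by ring,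
    rpow_add h1, rpow_two]
  field_simp
  ring

theorem tendsto_div_one_add_atTop : Tendsto (fun t : ℝ => t / (1 + t)) atTop (𝓝 1) := by
  have h := (tendsto_inv_atTop_zero.const_add (1 : ℝ)).inv₀ (by norm_num)
  rw [add_zero, inv_one] at h
  refine h.congr' ?_
  filter_upwards [eventually_gt_atTop 0] with t ht
  field_simp
  ring

theorem integrableOn_and_integral_rpow_mul_one_add_neg {k : ℝ} (hk : 0 < k) :
    IntegrableOn (fun t : ℝ => t ^ (k - 1) * (1 + t) ^ (-(k + 1))) (Ioi 0) ∧
      ∫ t in Ioi (0 : ℝ), t ^ (k - 1) * (1 + t) ^ (-(k + 1)) = 1 / k := by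
  set F : ℝ → ℝ := fun s => (s / (1 + s)) ^ k / k
  have hderiv : ∀ t ∈ Ioi (0 : ℝ), HasDerivAt F (t ^ (k - 1) * (1 + t) ^ (-(k + 1))) t := by
    intro t ht
    refine ((hasDerivAt_div_one_add_rpow k ht).div_const k).congr_deriv ?_
    field_simp
  have hcont : ContinuousWithinAt F (Ici 0) 0 := by
    refine ContinuousAt.continuousWithinAt (ContinuousAt.div_const ?_ _)
    refine ContinuousAt.rpow_const ?_ (Or.inr hk.le)
    exact continuousAt_id.div (continuousAt_const.add continuousAt_id) (by norm_num)
  have hlim : Tendsto F atTop (𝓝 (1 / k)) := by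
    have := (tendsto_div_one_add_atTop.rpow_const (p := k) (Or.inl one_ne_zero)).div_const k
    rwa [one_rpow] at this
  have hnonneg : ∀ t ∈ Ioi (0 : ℝ), 0 ≤ t ^ (k - 1) * (1 + t) ^ (-(k + 1)) := by
    intro t (ht : 0 < t)
    positivity
  refine ⟨integrableOn_Ioi_deriv_of_nonneg hcont hderiv hnonneg hlim, ?_⟩
  rw [integral_Ioi_of_hasDerivAt_of_nonneg hcont hderiv hnonneg hlim]
  simp [F, zero_rpow hk.ne']

theorem integrableOn_and_integral_rpow_mul_one_add_rpow_neg {p k : ℝ} (hp : 0 < p) (hk : 0 < k) :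
    IntegrableOn (fun r : ℝ => r ^ (p * k - 1) * (1 + r ^ p) ^ (-(k + 1))) (Ioi 0) ∧
      ∫ r in Ioi (0 : ℝ), r ^ (p * k - 1) * (1 + r ^ p) ^ (-(k + 1)) = 1 / (p * k) := by
  obtain ⟨hint, hval⟩ := integrableOn_and_integral_rpow_mul_one_add_neg hk
  set g : ℝ → ℝ := fun t => t ^ (k - 1) * (1 + t) ^ (-(k + 1))
  have hsubst : EqOn (fun r : ℝ => r ^ (p - 1) • g (r ^ p))
      (fun r => r ^ (p * k - 1) * (1 + r ^ p) ^ (-(k + 1))) (Ioi 0) := by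
    intro r (hr : 0 < r)
    simp only [g, smul_eq_mul, ← rpow_mul hr.le, ← mul_assoc, ← rpow_add hr]
    ring_nf
  refine ⟨((integrableOn_Ioi_comp_rpow_iff' g hp.ne').2 hint).congr_fun hsubst measurableSet_Ioi,
    ?_⟩
  rw [← setIntegral_congr_fun measurableSet_Ioi hsubst]
  have hchange := integral_comp_rpow_Ioi_of_pos (g := g) hp
  simp only [smul_eq_mul, mul_assoc, integral_const_mul, hval] at hchange
  simp only [smul_eq_mul]
  rw [mul_comm p k, ← div_div, ← hchange]
  field_simp

theorem integrable_and_integral_one_add_norm_rpow_neg {E : Type*} [NormedAddCommGroup E]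
    [NormedSpace ℝ E] [FiniteDimensional ℝ E] [MeasurableSpace E] [BorelSpace E] [Nontrivial E]
    (μ : Measure E) [μ.IsAddHaarMeasure] {p : ℝ} (hp : 0 < p) :
    Integrable (fun x : E => (1 + ‖x‖ ^ p) ^ (-(Module.finrank ℝ E / p + 1))) μ ∧
      ∫ x, (1 + ‖x‖ ^ p) ^ (-(Module.finrank ℝ E / p + 1)) ∂μ = μ.real (Metric.ball 0 1) := by
  set n := Module.finrank ℝ E with hn_def
  have hn : 0 < n := Module.finrank_pos
  obtain ⟨hint, hval⟩ :=
    integrableOn_and_integral_rpow_mul_one_add_rpow_neg hp (k := n / p) (by positivity)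
  have hradial : EqOn (fun r : ℝ => r ^ (p * (n / p) - 1) * (1 + r ^ p) ^ (-(n / p + 1)))
      (fun r => r ^ (n - 1) • (1 + r ^ p) ^ (-(n / p + 1))) (Ioi 0) := by
    intro r _
    dsimp only
    rw [smul_eq_mul, mul_div_cancel₀ _ hp.ne', ← rpow_natCast, Nat.cast_sub hn, Nat.cast_one]
  refine ⟨(integrable_fun_norm_addHaar μ).2 (hint.congr_fun hradial measurableSet_Ioi), ?_⟩
  rw [integral_fun_norm_addHaar μ fun r => (1 + r ^ p) ^ (-(n / p + 1)),
    ← setIntegral_congr_fun measurableSet_Ioi hradial, hval, nsmul_eq_mul, smul_eq_mul, ← hn_def]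
  have hn' : (n : ℝ) ≠ 0 := by positivity
  field_simp

/-- **Total mass of the explicit stationary solutions.**
For `N ≥ 2` and `λ > 0`, `X_λ(x) = (N^{2N−1}/(N−1)^{N−1}) λ^N (1+|λx|^{N/(N−1)})^{−N}`
is integrable on `ℝ^N` and `∫ X_λ = ω_N (N²/(N−1))^{N−1}`, where
`ω_N = N·vol(B₁)` is the surface measure of the unit sphere; in particular the total
mass is independent of `λ`. -/
theorem mass_of_stationary_solution
    (N : ℕ) (hN : 2 ≤ N)
    (lam : ℝ) (hlam : 0 < lam)
    (X : EuclideanSpace ℝ (Fin N) → ℝ)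
    (hX : ∀ x : EuclideanSpace ℝ (Fin N),
      X x = ((N : ℝ) ^ (2 * N - 1) / ((N : ℝ) - 1) ^ (N - 1)) * lam ^ N *
        (1 + ‖lam • x‖ ^ ((N : ℝ) / ((N : ℝ) - 1))) ^ (-(N : ℝ)))
    (ωN : ℝ)
    (hω : ωN = (N : ℝ) * (volume (Metric.ball (0 : EuclideanSpace ℝ (Fin N)) 1)).toReal) :
    Integrable X volume ∧
    ∫ x : EuclideanSpace ℝ (Fin N), X x
      = ωN * ((N : ℝ) ^ 2 / ((N : ℝ) - 1)) ^ (N - 1) := by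
  have hN1 : (1 : ℝ) < N := by exact_mod_cast hN
  have : Nontrivial (EuclideanSpace ℝ (Fin N)) :=
    Module.nontrivial_of_finrank_pos (R := ℝ) (by rw [finrank_euclideanSpace_fin]; omega)
  set p : ℝ := N / (N - 1)
  have hp : 0 < p := div_pos (by linarith) (by linarith)
  have hexp : (Module.finrank ℝ (EuclideanSpace ℝ (Fin N)) : ℝ) / p + 1 = N := by
    rw [finrank_euclideanSpace_fin, div_div_cancel₀ (by positivity), sub_add_cancel]
  obtain ⟨hint, hval⟩ :=
    integrable_and_integral_one_add_norm_rpow_neg (volume : Measure (EuclideanSpace ℝ (Fin N))) hp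
  rw [hexp] at hint hval
  have hconst : (N : ℝ) ^ (2 * N - 1) / ((N : ℝ) - 1) ^ (N - 1)
      = N * ((N : ℝ) ^ 2 / ((N : ℝ) - 1)) ^ (N - 1) := by
    rw [div_pow, ← pow_mul, show 2 * N - 1 = 1 + 2 * (N - 1) by omega, pow_add, pow_one,
      mul_div_assoc]
  rw [funext hX]
  refine ⟨(hint.comp_smul hlam.ne').const_mul _, ?_⟩
  rw [integral_const_mul,
    Measure.integral_comp_smul volume (fun y => (1 + ‖y‖ ^ p) ^ (-(N : ℝ))), hval,
    finrank_euclideanSpace_fin, abs_of_pos (by positivity), smul_eq_mul, hω, hconst, Measure.real]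
  field_simp
end

section
/- Let N ≥ 3 be an integer, B > 0 and c > 0. Suppose R : (0,1)×(0,∞) → ℝ is measurable with |R(ξ,t)| ≤ B for all (ξ,t), such that for each t the function ξ ↦ ξ^{2/N−1}(2−ξ)|R(ξ,t)| is integrable on (0,1), and set Ψ(t) := ∫₀¹ ξ^{2/N−1}(2−ξ)|R(ξ,t)| dξ. Assume Ψ is nonincreasing on (0,∞) and Ψ(t) ≤ Ψ(t₀) − c ∫_{t₀}^{t} ∫₀¹ |R(ξ,τ)| dξ dτ for all 0 < t₀ ≤ t < ∞. Then Ψ(t) → 0 as t → ∞. -/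
open Set MeasureTheory Filter Topology

/-! The weight `ξ ^ a * (2 - ξ)`, `a = 2/N - 1 ∈ (-1, 0)`, is integrable at `0`, so splitting
`(0, 1)` at `η` gives `Ψ t ≤ 2B η^(a+1)/(a+1) + 2 η^a ∫₀¹ |R(ξ, t)| dξ`. If `Ψ` stayed above some
`ε > 0`, then for `η` small the first term is at most `ε/2`, so `∫₀¹ |R(ξ, t)| dξ ≥ ε / (4 η^a)` for
all `t`, and the dissipation inequality drives `Ψ` below `0` in finite time. Being nonnegative and
nonincreasing, `Ψ` therefore tends to `0`. -/

theorem tendsto_atTop_zero_of_antitoneOn {f : ℝ → ℝ} {a : ℝ} (hanti : AntitoneOn f (Ioi a))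
    (hnonneg : ∀ t > a, 0 ≤ f t) (hsmall : ∀ ε > 0, ∃ t > a, f t < ε) :
    Tendsto f atTop (𝓝 0) := by
  refine tendsto_order.2 ⟨fun b hb => ?_, fun ε hε => ?_⟩
  · filter_upwards [eventually_gt_atTop a] with t ht
    exact hb.trans_le (hnonneg t ht)
  · obtain ⟨t₀, ht₀, hlt⟩ := hsmall ε hε
    filter_upwards [eventually_ge_atTop t₀] with t ht
    exact (hanti ht₀ (mem_Ioi.2 (ht₀.trans_le ht)) ht).trans_lt hlt

theorem exists_mem_Ioo_mul_rpow_le (K : ℝ) {q ε : ℝ} (hq : 0 < q) (hε : 0 < ε) :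
    ∃ η ∈ Ioo (0 : ℝ) 1, K * η ^ q ≤ ε := by
  have hlim : Tendsto (fun η : ℝ => K * η ^ q) (𝓝[>] 0) (𝓝 0) := by
    have := ((Real.continuousAt_rpow_const 0 q (Or.inr hq.le)).tendsto.const_mul K).mono_left
      (nhdsWithin_le_nhds (s := Ioi 0))
    simpa [Real.zero_rpow hq.ne'] using this
  exact (Filter.Eventually.and (Ioo_mem_nhdsGT one_pos) (hlim.eventually (ge_mem_nhds hε))).exists

theorem exists_neg_of_le_sub_mul_integral {Ψ F : ℝ → ℝ} {c δ t₀ : ℝ} (hc : 0 < c) (hδ : 0 < δ)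
    (hF : ∀ t ≥ t₀, δ ≤ F t) (hFint : ∀ t ≥ t₀, IntervalIntegrable F volume t₀ t)
    (hΨ : ∀ t ≥ t₀, Ψ t ≤ Ψ t₀ - c * ∫ τ in t₀..t, F τ) : ∃ t ≥ t₀, Ψ t < 0 := by
  have hlinear : ∀ t ≥ t₀, Ψ t ≤ Ψ t₀ - c * (δ * (t - t₀)) := fun t ht => by
    have hint : δ * (t - t₀) ≤ ∫ τ in t₀..t, F τ := by
      simpa [mul_comm] using intervalIntegral.integral_mono_on ht intervalIntegrable_const
        (hFint t ht) fun τ hτ => hF τ hτ.1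
    nlinarith [hΨ t ht]
  set t := t₀ + (|Ψ t₀| + 1) / (c * δ)
  have hdrop : c * (δ * (t - t₀)) = |Ψ t₀| + 1 := by
    simp only [t]
    field_simp
    ring
  have ht : t₀ ≤ t := le_add_of_nonneg_right (by positivity)
  exact ⟨t, ht, by linarith [hlinear t ht, le_abs_self (Ψ t₀)]⟩

theorem intervalIntegrable_setIntegral_abs {R : ℝ → ℝ → ℝ} {s : Set ℝ} {B t₀ t : ℝ}
    (hmeas : Measurable fun p : ℝ × ℝ => R p.1 p.2) (hs : volume s < ⊤)
    (hbound : ∀ ξ ∈ s, ∀ τ, 0 < τ → |R ξ τ| ≤ B) (ht₀ : 0 < t₀) (ht : 0 < t) :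
    IntervalIntegrable (fun τ => ∫ ξ in s, |R ξ τ|) volume t₀ t := by
  have hF : StronglyMeasurable fun τ => ∫ ξ in s, |R ξ τ| :=
    ((hmeas.comp measurable_swap).abs.stronglyMeasurable).integral_prod_right'
  refine (intervalIntegrable_iff.2 <| IntegrableOn.of_bound measure_Ioc_lt_top
    hF.aestronglyMeasurable (B * volume.real s) <| ae_restrict_of_forall_mem measurableSet_uIoc
    fun τ hτ => norm_setIntegral_le_of_norm_le_const hs fun ξ hξ => ?_)
  have hτ : 0 < τ := (lt_min ht₀ ht).trans hτ.1
  simpa using hbound ξ hξ τ hτ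

theorem setIntegral_Ioo_zero_rpow_mul_abs_le {a B η : ℝ} {f : ℝ → ℝ} (ha : -1 < a) (hη : 0 < η)
    (hη2 : η ≤ 2) (hf : ∀ ξ ∈ Ioo 0 η, |f ξ| ≤ B) :
    ∫ ξ in Ioo 0 η, ξ ^ a * (2 - ξ) * |f ξ| ≤ 2 * B / (a + 1) * η ^ (a + 1) := by
  have hrpow : IntegrableOn (fun ξ : ℝ => ξ ^ a) (Ioo 0 η) :=
    ((intervalIntegral.intervalIntegrable_rpow' ha).1).mono_set Ioo_subset_Ioc_self
  calc ∫ ξ in Ioo 0 η, ξ ^ a * (2 - ξ) * |f ξ|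
      ≤ ∫ ξ in Ioo 0 η, 2 * B * ξ ^ a := by
        refine integral_mono_of_nonneg ?_ (hrpow.const_mul _) ?_ <;>
          refine ae_restrict_of_forall_mem measurableSet_Ioo fun ξ ⟨hξ0, hξη⟩ => ?_
        · have : 0 ≤ 2 - ξ := by linarith
          positivity
        · have hfξ := hf ξ ⟨hξ0, hξη⟩
          calc ξ ^ a * (2 - ξ) * |f ξ| ≤ ξ ^ a * 2 * B :=
                mul_le_mul (mul_le_mul_of_nonneg_left (by linarith) (Real.rpow_nonneg hξ0.le a))
                  hfξ (abs_nonneg _) (by positivity)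
            _ = 2 * B * ξ ^ a := by ring
    _ = 2 * B / (a + 1) * η ^ (a + 1) := by
      rw [integral_const_mul, ← integral_Ioc_eq_integral_Ioo,
        ← intervalIntegral.integral_of_le hη.le, integral_rpow (Or.inl ha),
        Real.zero_rpow (by linarith : a + 1 ≠ 0)]
      ring

theorem setIntegral_Ico_rpow_mul_abs_le {a η : ℝ} {f : ℝ → ℝ} (ha : a ≤ 0) (hη : 0 < η)
    (hf : IntegrableOn f (Ioo 0 1)) :
    ∫ ξ in Ico η 1, ξ ^ a * (2 - ξ) * |f ξ| ≤ 2 * η ^ a * ∫ ξ in Ioo 0 1, |f ξ| := by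
  have hsub : Ico η 1 ⊆ Ioo 0 1 := fun ξ hξ => ⟨hη.trans_le hξ.1, hξ.2⟩
  have habs : IntegrableOn (fun ξ => |f ξ|) (Ioo 0 1) := hf.abs
  calc ∫ ξ in Ico η 1, ξ ^ a * (2 - ξ) * |f ξ|
      ≤ ∫ ξ in Ico η 1, 2 * η ^ a * |f ξ| := by
        refine integral_mono_of_nonneg ?_ ((habs.mono_set hsub).const_mul _) ?_ <;>
          refine ae_restrict_of_forall_mem measurableSet_Ico fun ξ ⟨hηξ, hξ1⟩ => ?_
        · have := Real.rpow_nonneg (hη.le.trans hηξ) a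
          have : 0 ≤ 2 - ξ := by linarith
          positivity
        · calc ξ ^ a * (2 - ξ) * |f ξ| ≤ η ^ a * 2 * |f ξ| :=
                mul_le_mul_of_nonneg_right (mul_le_mul (Real.rpow_le_rpow_of_nonpos hη hηξ ha)
                  (by linarith) (by linarith) (Real.rpow_nonneg hη.le a)) (abs_nonneg _)
            _ = 2 * η ^ a * |f ξ| := by ring
    _ = 2 * η ^ a * ∫ ξ in Ico η 1, |f ξ| := integral_const_mul _ _
    _ ≤ 2 * η ^ a * ∫ ξ in Ioo 0 1, |f ξ| := mul_le_mul_of_nonneg_left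
        (setIntegral_mono_set habs (.of_forall fun _ => abs_nonneg _) hsub.eventuallyLE)
        (by positivity)

theorem setIntegral_Ioo_zero_one_rpow_mul_abs_le {a B η : ℝ} {f : ℝ → ℝ} (ha : -1 < a)
    (ha0 : a ≤ 0) (hη : η ∈ Ioo (0 : ℝ) 1) (hbound : ∀ ξ ∈ Ioo (0 : ℝ) 1, |f ξ| ≤ B)
    (hf : IntegrableOn f (Ioo 0 1))
    (hweighted : IntegrableOn (fun ξ => ξ ^ a * (2 - ξ) * |f ξ|) (Ioo 0 1)) :
    ∫ ξ in Ioo 0 1, ξ ^ a * (2 - ξ) * |f ξ| ≤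
      2 * B / (a + 1) * η ^ (a + 1) + 2 * η ^ a * ∫ ξ in Ioo 0 1, |f ξ| := by
  obtain ⟨hη0, hη1⟩ := hη
  have hsplit : ∫ ξ in Ioo 0 1, ξ ^ a * (2 - ξ) * |f ξ| =
      (∫ ξ in Ioo 0 η, ξ ^ a * (2 - ξ) * |f ξ|) + ∫ ξ in Ico η 1, ξ ^ a * (2 - ξ) * |f ξ| := by
    rw [← setIntegral_union (Ico_disjoint_Ico_same.mono_left Ioo_subset_Ico_self)
      measurableSet_Ico (hweighted.mono_set (Ioo_subset_Ioo_right hη1.le))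
      (hweighted.mono_set fun ξ hξ => ⟨hη0.trans_le hξ.1, hξ.2⟩),
      Ioo_union_Ico_eq_Ioo hη0 hη1.le]
  rw [hsplit]
  gcongr
  · exact setIntegral_Ioo_zero_rpow_mul_abs_le ha hη0 (by linarith)
      fun ξ hξ => hbound ξ (Ioo_subset_Ioo_right hη1.le hξ)
  · exact setIntegral_Ico_rpow_mul_abs_le ha0 hη0 hf

theorem weighted_L1_decay_general
    (N : ℕ) (hN : 3 ≤ N)
    (B : ℝ) (c : ℝ) (hc : 0 < c)
    (R : ℝ → ℝ → ℝ)
    (hmeas : Measurable (fun p : ℝ × ℝ => R p.1 p.2))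
    (hbound : ∀ ξ ∈ Ioo (0:ℝ) 1, ∀ t : ℝ, 0 < t → |R ξ t| ≤ B)
    (hint : ∀ t : ℝ, 0 < t →
      IntegrableOn (fun ξ : ℝ => ξ ^ ((2 : ℝ) / N - 1) * (2 - ξ) * |R ξ t|) (Ioo 0 1) volume)
    (Ψ : ℝ → ℝ)
    (hΨ : ∀ t : ℝ, Ψ t = ∫ ξ in Ioo (0:ℝ) 1, ξ ^ ((2 : ℝ) / N - 1) * (2 - ξ) * |R ξ t|)
    (hanti : AntitoneOn Ψ (Ioi 0))
    (hdecay : ∀ t₀ t : ℝ, 0 < t₀ → t₀ ≤ t →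
      Ψ t ≤ Ψ t₀ - c * ∫ τ in t₀..t, ∫ ξ in Ioo (0:ℝ) 1, |R ξ τ|) :
    Filter.Tendsto Ψ Filter.atTop (nhds 0) := by
  set a : ℝ := (2 : ℝ) / N - 1
  have hN' : (3 : ℝ) ≤ N := by exact_mod_cast hN
  have ha : -1 < a := by
    have : (0 : ℝ) < 2 / N := by positivity
    linarith
  have ha0 : a ≤ 0 := by
    have : (2 : ℝ) / N ≤ 1 := (div_le_one (by positivity)).2 (by linarith)
    linarith
  have hRint : ∀ t > 0, IntegrableOn (fun ξ => R ξ t) (Ioo 0 1) := fun t ht =>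
    .of_bound measure_Ioo_lt_top
      (hmeas.comp (measurable_id.prodMk measurable_const)).aestronglyMeasurable B
      (ae_restrict_of_forall_mem measurableSet_Ioo fun ξ hξ => hbound ξ hξ t ht)
  have hΨnonneg : ∀ t > 0, 0 ≤ Ψ t := fun t _ => (hΨ t).symm ▸
    setIntegral_nonneg measurableSet_Ioo fun ξ hξ => by
      have : 0 ≤ 2 - ξ := by linarith [hξ.2]
      have := Real.rpow_nonneg hξ.1.le a
      positivity
  refine tendsto_atTop_zero_of_antitoneOn hanti hΨnonneg fun ε hε => ?_
  by_contra! hlarge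
  obtain ⟨η, hη, hηsmall⟩ :=
    exists_mem_Ioo_mul_rpow_le (2 * B / (a + 1)) (by linarith : 0 < a + 1) (half_pos hε)
  have hηa : 0 < η ^ a := Real.rpow_pos_of_pos hη.1 a
  have hmass : ∀ t ≥ 1, ε / (4 * η ^ a) ≤ ∫ ξ in Ioo (0:ℝ) 1, |R ξ t| := fun t ht => by
    have ht0 : 0 < t := by linarith
    have hsplit := setIntegral_Ioo_zero_one_rpow_mul_abs_le ha ha0 hη
      (fun ξ hξ => hbound ξ hξ t ht0) (hRint t ht0) (hint t ht0)
    rw [div_le_iff₀ (by positivity)]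
    linarith [hlarge t ht0, hΨ t]
  obtain ⟨t, ht, hneg⟩ := exists_neg_of_le_sub_mul_integral hc (by positivity) hmass
    (fun t ht => intervalIntegrable_setIntegral_abs hmeas measure_Ioo_lt_top hbound one_pos
      (by linarith))
    (fun t ht => hdecay 1 t one_pos ht)
  exact (hΨnonneg t (by linarith)).not_gt hneg

/-- **Decay of the weighted L¹ functional.** Let `N ≥ 3`, `B, c > 0`, and let
`R : (0,1)×(0,∞) → ℝ` be measurable with `|R| ≤ B`, such that
`Ψ(t) = ∫₀¹ ξ^{2/N−1}(2−ξ)|R(ξ,t)| dξ` is well defined, nonincreasing on `(0,∞)`, and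
`Ψ(t) ≤ Ψ(t₀) − c ∫_{t₀}^t ∫₀¹ |R| dξ dτ` for all `0 < t₀ ≤ t`. Then `Ψ(t) → 0` as
`t → ∞`. -/
theorem weighted_L1_decay
    (N : ℕ) (hN : 3 ≤ N)
    (B : ℝ) (hB : 0 < B) (c : ℝ) (hc : 0 < c)
    (R : ℝ → ℝ → ℝ)
    (hmeas : Measurable (fun p : ℝ × ℝ => R p.1 p.2))
    (hbound : ∀ ξ ∈ Ioo (0:ℝ) 1, ∀ t : ℝ, 0 < t → |R ξ t| ≤ B)
    (hint : ∀ t : ℝ, 0 < t →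
      IntegrableOn (fun ξ : ℝ => ξ ^ ((2 : ℝ) / N - 1) * (2 - ξ) * |R ξ t|) (Ioo 0 1) volume)
    (Ψ : ℝ → ℝ)
    (hΨ : ∀ t : ℝ, Ψ t = ∫ ξ in Ioo (0:ℝ) 1, ξ ^ ((2 : ℝ) / N - 1) * (2 - ξ) * |R ξ t|)
    (hanti : AntitoneOn Ψ (Ioi 0))
    (hdecay : ∀ t₀ t : ℝ, 0 < t₀ → t₀ ≤ t →
      Ψ t ≤ Ψ t₀ - c * ∫ τ in t₀..t, ∫ ξ in Ioo (0:ℝ) 1, |R ξ τ|) :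
    Filter.Tendsto Ψ Filter.atTop (nhds 0) :=
  weighted_L1_decay_general N hN B c hc R hmeas hbound hint Ψ hΨ hanti hdecay
end
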